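/- arXiv:math/0702094 — 2 statements merged into one kernel-verified Lean document; each statement's English description precedes it below -/
import Mathlib

section
/- Let ‖·‖ be a reparametrization invariant norm on AS¹(ℝ). Then for every monotone (everywhere increasing or everywhere decreasing) function ψ ∈ AS¹(ℝ) one has ‖ψ‖ = (sup_t |ψ(t)|) · ‖S‖. -/
open MeasureTheory Set

noncomputable section

/-- The function `S` of the paper. -/
def Sfun (t : ℝ) : ℝ :=
  if t ≤ -1 then 0
  else if t ≤ 0 then (t + 1) ^ 2 / 2
  else if t ≤ 1 then 1 - (t - 1) ^ 2 / 2
  else 1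

/-- The function `Λ` of the paper. -/
def Lam (t : ℝ) : ℝ := Sfun (t + 1) - Sfun (t - 1)

/-- Almost sigmoidal functions of class `C¹`. -/
def AS1 (φ : ℝ → ℝ) : Prop :=
  ContDiff ℝ 1 φ ∧
    ∃ a b : ℝ, a ≤ b ∧ (∀ t ≤ a, φ t = 0) ∧ ∀ t, b ≤ t → φ t = φ b

/-- Orientation-preserving `C¹`-diffeomorphisms of `ℝ`. -/
def OPDiffeo (h : ℝ → ℝ) : Prop :=
  ContDiff ℝ 1 h ∧ Function.Bijective h ∧
    (∃ g : ℝ → ℝ, ContDiff ℝ 1 g ∧ Function.LeftInverse g h ∧ Function.RightInverse g h) ∧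
    ∀ t, 0 < deriv h t

/-- Total variation `V_φ = ∫ |φ'|`. -/
def totalVar (φ : ℝ → ℝ) : ℝ := ∫ t, |deriv φ t|

/-- A reparametrization invariant norm on `AS¹(ℝ)`. -/
structure IsRPINorm (N : (ℝ → ℝ) → ℝ) : Prop where
  nonneg : ∀ φ, AS1 φ → 0 ≤ N φ
  eq_zero_iff : ∀ φ, AS1 φ → (N φ = 0 ↔ ∀ t, φ t = 0)
  smul : ∀ (c : ℝ) (φ : ℝ → ℝ), AS1 φ → N (fun t => c * φ t) = |c| * N φ
  triangle : ∀ φ ψ : ℝ → ℝ, AS1 φ → AS1 ψ → N (fun t => φ t + ψ t) ≤ N φ + N ψ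
  invariant : ∀ (φ h : ℝ → ℝ), AS1 φ → OPDiffeo h → N (φ ∘ h) = N φ

/-- The standard RPI-norm `‖φ‖_[ψ]`. -/
def stdNorm (ψ φ : ℝ → ℝ) : ℝ :=
  ⨆ h : {h : ℝ → ℝ // OPDiffeo h}, |∫ t, φ (-t) * deriv (ψ ∘ h.1) t|

/-- The function `S_n`. -/
def Sn (n : ℕ) : ℝ → ℝ := fun t => ∑ i ∈ Finset.range n, (-1 : ℝ) ^ i * Sfun (t - 2 * (i : ℝ))

/-- The function `L_n`. -/
def Lfun (n : ℕ) : ℝ → ℝ := fun t => ∑ i ∈ Finset.range n, (-1 : ℝ) ^ i * Lam (t - 4 * (i : ℝ))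

/-- `W` is a separating set for `f`: `f` is monotone on each connected component of `ℝ \ W`. -/
def IsSepSet (f : ℝ → ℝ) (W : Finset ℝ) : Prop :=
  ∀ t, t ∉ (W : Set ℝ) →
    MonotoneOn f (connectedComponentIn ((W : Set ℝ)ᶜ) t) ∨
      AntitoneOn f (connectedComponentIn ((W : Set ℝ)ᶜ) t)

/-- `f` is piecewise monotone. -/
def PiecewiseMonotone (f : ℝ → ℝ) : Prop := ∃ W : Finset ℝ, IsSepSet f W

/-- `l(f)`: the minimum cardinality of a separating set for `f`. -/
def lval (f : ℝ → ℝ) : ℕ := sInf {n : ℕ | ∃ W : Finset ℝ, W.card = n ∧ IsSepSet f W}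

/-!
Negating and rescaling `ψ`, we may assume that `ψ` is monotone, vanishes on `(-∞, a]` and equals
`1` on `[b, ∞)`. Let `σ = S ∘ g` with `g` affine, `g (a - 1) = -1`, `g (b + 1) = 1`. For
`0 < μ < 1` the function `φ = (1 - μ) ψ + μ σ` has positive derivative where `0 < φ < 1`, and near
both ends of that interval it is `S` composed with an affine map, because `S` is quadratic near
`±1`. Hence `φ = S ∘ h` for an orientation-preserving `C¹`-diffeomorphism `h`, and
`‖φ‖ = ‖S‖ = ‖σ‖`. The triangle inequality for `φ = (1 - μ) ψ + μ σ` and `(1 - μ) ψ = φ - μ σ`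
gives `‖S‖ ≤ (1 - μ) ‖ψ‖ + μ ‖S‖` and `(1 - μ) ‖ψ‖ ≤ (1 + μ) ‖S‖`; let `μ → 0`.
-/

open Filter Topology

theorem hasDerivAt_ite_le {f g f' g' : ℝ → ℝ} {c : ℝ} (hf : ∀ t, HasDerivAt f (f' t) t)
    (hg : ∀ t, HasDerivAt g (g' t) t) (hc : f c = g c) (hc' : f' c = g' c) (t : ℝ) :
    HasDerivAt (fun s => if s ≤ c then f s else g s) (if t ≤ c then f' t else g' t) t := by
  rcases lt_trichotomy t c with htc | rfl | htc
  · rw [if_pos htc.le]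
    refine (hf t).congr_of_eventuallyEq ?_
    filter_upwards [Iio_mem_nhds htc] with s hs using if_pos hs.le
  · rw [if_pos le_rfl]
    have hl : HasDerivWithinAt (fun s => if s ≤ t then f s else g s) (f' t) (Iic t) t :=
      (hf t).hasDerivWithinAt.congr (fun s hs => if_pos hs) (if_pos le_rfl)
    have hr : HasDerivWithinAt (fun s => if s ≤ t then f s else g s) (f' t) (Ici t) t := by
      refine hc' ▸ (hg t).hasDerivWithinAt.congr (fun s hs => ?_) (by rw [if_pos le_rfl, hc])
      split_ifs with hst
      · rw [le_antisymm hst hs, hc]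
      · rfl
    simpa only [Iic_union_Ici, hasDerivWithinAt_univ] using hl.union hr
  · rw [if_neg htc.not_ge]
    refine (hg t).congr_of_eventuallyEq ?_
    filter_upwards [Ioi_mem_nhds htc] with s hs using if_neg (not_le.2 hs)

theorem hasDerivAt_Sfun (t : ℝ) : HasDerivAt Sfun (max 0 (1 - |t|)) t := by
  have hq₁ (s : ℝ) : HasDerivAt (fun s => (s + 1) ^ 2 / 2) (s + 1) s :=
    ((((hasDerivAt_id' s).add_const 1).fun_pow 2).div_const 2).congr_deriv (by norm_num)
  have hq₂ (s : ℝ) : HasDerivAt (fun s => 1 - (s - 1) ^ 2 / 2) (1 - s) s :=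
    (((((hasDerivAt_id' s).sub_const 1).fun_pow 2).div_const 2).const_sub 1).congr_deriv
      (by norm_num)
  have h₂ := hasDerivAt_ite_le (c := 1) hq₂ (fun s => hasDerivAt_const s (1 : ℝ))
    (by norm_num) (by norm_num)
  have h₁ := hasDerivAt_ite_le (c := 0) hq₁ h₂ (by norm_num) (by norm_num)
  have h₀ := hasDerivAt_ite_le (c := -1) (fun s => hasDerivAt_const s (0 : ℝ)) h₁
    (by norm_num) (by norm_num) t
  refine (h₀ : HasDerivAt Sfun _ t).congr_deriv ?_
  rcases abs_cases t with ⟨h, _⟩ | ⟨h, _⟩ <;> rw [h] <;> split_ifs <;> grind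

theorem deriv_Sfun : deriv Sfun = fun t => max 0 (1 - |t|) :=
  funext fun t => (hasDerivAt_Sfun t).deriv

theorem contDiff_Sfun : ContDiff ℝ 1 Sfun :=
  contDiff_one_iff_deriv.2 ⟨fun t => (hasDerivAt_Sfun t).differentiableAt,
    deriv_Sfun ▸ by fun_prop⟩

theorem deriv_Sfun_pos {t : ℝ} (ht : t ∈ Ioo (-1) 1) : 0 < deriv Sfun t := by
  rw [deriv_Sfun]
  exact lt_max_of_lt_right (by rw [sub_pos, abs_lt]; exact ht)

theorem Sfun_of_le {t : ℝ} (h : t ≤ -1) : Sfun t = 0 := by simp [Sfun, h]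

theorem Sfun_of_ge {t : ℝ} (h : 1 ≤ t) : Sfun t = 1 := by
  unfold Sfun; split_ifs <;> nlinarith

theorem Sfun_of_mem_Icc_neg {t : ℝ} (h : t ∈ Icc (-1) 0) : Sfun t = (t + 1) ^ 2 / 2 := by
  unfold Sfun; split_ifs <;> nlinarith [h.1, h.2]

theorem Sfun_of_mem_Icc_pos {t : ℝ} (h : t ∈ Icc 0 1) : Sfun t = 1 - (t - 1) ^ 2 / 2 := by
  unfold Sfun; split_ifs <;> nlinarith [h.1, h.2]

theorem Sfun_mem_Ioo {t : ℝ} (h : t ∈ Ioo (-1) 1) : Sfun t ∈ Ioo 0 1 := by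
  unfold Sfun; split_ifs <;> constructor <;> nlinarith [h.1, h.2]

theorem as1_Sfun : AS1 Sfun :=
  ⟨contDiff_Sfun, -1, 1, by norm_num, fun _ => Sfun_of_le,
    fun _ ht => by rw [Sfun_of_ge ht, Sfun_of_ge le_rfl]⟩

theorem Sfun_neg_one_add_sqrt_mul {x μ : ℝ} (hx : x ≤ 0) (hμ₀ : 0 ≤ μ) (hμ₁ : μ ≤ 1) :
    Sfun (-1 + √μ * (x + 1)) = μ * Sfun x := by
  have hs₀ := Real.sqrt_nonneg μ
  have hs₁ : √μ ≤ 1 := Real.sqrt_le_one.2 hμ₁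
  rcases le_or_gt x (-1) with hx₁ | hx₁
  · rw [Sfun_of_le hx₁, Sfun_of_le (by nlinarith)]; ring
  · rw [Sfun_of_mem_Icc_neg ⟨hx₁.le, hx⟩, Sfun_of_mem_Icc_neg ⟨by nlinarith, by nlinarith⟩]
    nlinarith [Real.sq_sqrt hμ₀]

theorem Sfun_one_sub_sqrt_mul {x μ : ℝ} (hx : 0 ≤ x) (hμ₀ : 0 ≤ μ) (hμ₁ : μ ≤ 1) :
    Sfun (1 - √μ * (1 - x)) = 1 - μ * (1 - Sfun x) := by
  have hs₀ := Real.sqrt_nonneg μ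
  have hs₁ : √μ ≤ 1 := Real.sqrt_le_one.2 hμ₁
  rcases le_or_gt 1 x with hx₁ | hx₁
  · rw [Sfun_of_ge hx₁, Sfun_of_ge (by nlinarith)]; ring
  · rw [Sfun_of_mem_Icc_pos ⟨hx, hx₁.le⟩, Sfun_of_mem_Icc_pos ⟨by nlinarith, by nlinarith⟩]
    nlinarith [Real.sq_sqrt hμ₀]

/-- The inverse of `Sfun : [-1, 1] → [0, 1]`. -/
def Sinv (y : ℝ) : ℝ := if y ≤ 1 / 2 then -1 + √(2 * y) else 1 - √(2 * (1 - y))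

theorem continuous_Sinv : Continuous Sinv := by
  refine Continuous.if_le (by fun_prop) (by fun_prop) continuous_id continuous_const ?_
  rintro _ rfl; norm_num

theorem Sfun_Sinv {y : ℝ} (hy : y ∈ Icc 0 1) : Sfun (Sinv y) = y := by
  obtain ⟨hy₀, hy₁⟩ := hy
  unfold Sinv
  split_ifs with h
  · have hs := Real.sq_sqrt (by linarith : 0 ≤ 2 * y)
    have : √(2 * y) ≤ 1 := Real.sqrt_le_one.2 (by linarith)
    rw [Sfun_of_mem_Icc_neg ⟨by linarith [Real.sqrt_nonneg (2 * y)], by linarith⟩]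
    nlinarith
  · have hs := Real.sq_sqrt (by linarith : 0 ≤ 2 * (1 - y))
    have : √(2 * (1 - y)) ≤ 1 := Real.sqrt_le_one.2 (by linarith)
    rw [Sfun_of_mem_Icc_pos ⟨by linarith, by linarith [Real.sqrt_nonneg (2 * (1 - y))]⟩]
    nlinarith

theorem Sinv_Sfun {x : ℝ} (hx : x ∈ Icc (-1) 1) : Sinv (Sfun x) = x := by
  obtain ⟨hx₀, hx₁⟩ := hx
  rcases le_or_gt x 0 with h | h
  · rw [Sfun_of_mem_Icc_neg ⟨hx₀, h⟩, Sinv, if_pos (by nlinarith), mul_div_cancel₀ _ two_ne_zero,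
      Real.sqrt_sq (by linarith)]
    ring
  · rw [Sfun_of_mem_Icc_pos ⟨h.le, hx₁⟩, Sinv, if_neg (by nlinarith), show 2 * (1 - (1 - (x - 1) ^ 2 / 2)) = (1 - x) ^ 2 by ring,
      Real.sqrt_sq (by linarith)]
    ring

theorem Sinv_mem_Ioo {y : ℝ} (hy : y ∈ Ioo 0 1) : Sinv y ∈ Ioo (-1) 1 := by
  obtain ⟨hy₀, hy₁⟩ := hy
  unfold Sinv
  split_ifs with h
  · have : √(2 * y) ≤ 1 := Real.sqrt_le_one.2 (by linarith)
    exact ⟨by linarith [Real.sqrt_pos.2 (by linarith : 0 < 2 * y)], by linarith⟩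
  · have : √(2 * (1 - y)) < 1 := (Real.sqrt_lt' one_pos).2 (by linarith)
    exact ⟨by linarith, by linarith [Real.sqrt_pos.2 (by linarith : 0 < 2 * (1 - y))]⟩

theorem hasDerivAt_Sinv {y : ℝ} (hy : y ∈ Ioo 0 1) :
    HasDerivAt Sinv (deriv Sfun (Sinv y))⁻¹ y := by
  refine (contDiff_Sfun.differentiable one_ne_zero _).hasDerivAt.of_local_left_inverse
    continuous_Sinv.continuousAt (deriv_Sfun_pos (Sinv_mem_Ioo hy)).ne' ?_
  filter_upwards [Ioo_mem_nhds hy.1 hy.2] with z hz using Sfun_Sinv (Ioo_subset_Icc_self hz)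

theorem contDiffOn_Sinv : ContDiffOn ℝ 1 Sinv (Ioo 0 1) := by
  rw [show (1 : WithTop ℕ∞) = 0 + 1 from rfl, contDiffOn_succ_iff_deriv_of_isOpen isOpen_Ioo]
  refine ⟨fun y hy => (hasDerivAt_Sinv hy).differentiableAt.differentiableWithinAt,
    by simp, contDiffOn_zero.2 ?_⟩
  refine ContinuousOn.congr (f := fun y => (deriv Sfun (Sinv y))⁻¹) ?_
    fun y hy => (hasDerivAt_Sinv hy).deriv
  exact ((contDiff_Sfun.continuous_deriv le_rfl).comp continuous_Sinv).continuousOn.inv₀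
    fun y hy => (deriv_Sfun_pos (Sinv_mem_Ioo hy)).ne'

theorem AS1.const_mul {φ : ℝ → ℝ} (hφ : AS1 φ) (c : ℝ) : AS1 (fun t => c * φ t) := by
  obtain ⟨hC, a, b, hab, h0, h1⟩ := hφ
  exact ⟨contDiff_const.mul hC, a, b, hab, fun t ht => by simp [h0 t ht],
    fun t ht => by simp [h1 t ht]⟩

theorem OPDiffeo.strictMono {h : ℝ → ℝ} (hh : OPDiffeo h) : StrictMono h :=
  strictMono_of_deriv_pos hh.2.2.2

theorem AS1.comp_opDiffeo {φ h : ℝ → ℝ} (hφ : AS1 φ) (hh : OPDiffeo h) : AS1 (φ ∘ h) := by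
  obtain ⟨hC, a, b, hab, h0, h1⟩ := hφ
  have hmono := hh.strictMono
  obtain ⟨hhC, -, ⟨g, -, -, hgh⟩, -⟩ := hh
  have hle {s t : ℝ} : s ≤ h t ↔ g s ≤ t := by rw [← hmono.le_iff_le (a := g s), hgh]
  have hge {s t : ℝ} : h t ≤ s ↔ t ≤ g s := by rw [← hmono.le_iff_le (b := g s), hgh]
  refine ⟨hC.comp hhC, g a, g b, hle.1 (by rwa [hgh]), fun t ht => h0 _ (hge.2 ht),
    fun t ht => ?_⟩
  simp only [Function.comp_apply, hgh b, h1 _ (hle.2 ht)]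

theorem OPDiffeo.of_deriv_pos {h : ℝ → ℝ} (hC : ContDiff ℝ 1 h) (hpos : ∀ t, 0 < deriv h t)
    (htop : Tendsto h atTop atTop) (hbot : Tendsto h atBot atBot) : OPDiffeo h := by
  have hmono : StrictMono h := strictMono_of_deriv_pos hpos
  have hsurj : Function.Surjective h := hC.continuous.surjective htop hbot
  set e := hmono.orderIsoOfSurjective h hsurj
  have hder (y : ℝ) : HasDerivAt e.symm (deriv h (e.symm y))⁻¹ y :=
    ((hC.differentiable one_ne_zero _).hasDerivAt).of_local_left_inverse
      e.symm.continuous.continuousAt (hpos _).ne' (Eventually.of_forall e.apply_symm_apply)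
  refine ⟨hC, ⟨hmono.injective, hsurj⟩, ⟨e.symm, ?_, e.symm_apply_apply, e.apply_symm_apply⟩, hpos⟩
  refine contDiff_one_iff_deriv.2 ⟨fun y => (hder y).differentiableAt, ?_⟩
  rw [funext fun y => (hder y).deriv]
  exact ((hC.continuous_deriv le_rfl).comp e.symm.continuous).inv₀ fun y => (hpos _).ne'

def rescale (a b t : ℝ) : ℝ := (2 * t - a - b) / (b - a + 2)

section Rescale

variable {a b : ℝ}

theorem hasDerivAt_rescale (t : ℝ) : HasDerivAt (rescale a b) (2 / (b - a + 2)) t :=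
  (((((hasDerivAt_id' t).const_mul 2).sub_const a).sub_const b).div_const _).congr_deriv
    (by ring)

@[fun_prop]
theorem contDiff_rescale {n : WithTop ℕ∞} : ContDiff ℝ n (rescale a b) := by
  unfold rescale; fun_prop

theorem strictMono_rescale (hab : a ≤ b) : StrictMono (rescale a b) := fun s t hst =>
  div_lt_div_of_pos_right (by linarith) (by linarith)

theorem rescale_sub_one (hab : a ≤ b) : rescale a b (a - 1) = -1 := by
  rw [rescale, div_eq_iff (by linarith)]; ring

theorem rescale_add_one (hab : a ≤ b) : rescale a b (b + 1) = 1 := by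
  rw [rescale, div_eq_iff (by linarith)]; ring

theorem rescale_midpoint : rescale a b ((a + b) / 2) = 0 := by
  simp only [rescale]; ring

theorem rescale_mem_Ioo (hab : a ≤ b) {t : ℝ} (ht : t ∈ Ioo (a - 1) (b + 1)) :
    rescale a b t ∈ Ioo (-1) 1 := by
  simpa only [rescale_sub_one hab, rescale_add_one hab] using
    (strictMono_rescale hab).mapsTo_Ioo ht

theorem tendsto_rescale_atTop (hab : a ≤ b) : Tendsto (rescale a b) atTop atTop :=
  tendsto_atTop_atTop.2 fun M => ⟨(M * (b - a + 2) + a + b) / 2, fun t ht => by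
    rw [rescale, le_div_iff₀ (by linarith)]; linarith⟩

theorem tendsto_rescale_atBot (hab : a ≤ b) : Tendsto (rescale a b) atBot atBot :=
  tendsto_atBot_atBot.2 fun M => ⟨(M * (b - a + 2) + a + b) / 2, fun t ht => by
    rw [rescale, div_le_iff₀ (by linarith)]; linarith⟩

theorem opDiffeo_rescale (hab : a ≤ b) : OPDiffeo (rescale a b) :=
  .of_deriv_pos contDiff_rescale
    (fun t => (hasDerivAt_rescale t).deriv ▸ div_pos two_pos (by linarith))
    (tendsto_rescale_atTop hab) (tendsto_rescale_atBot hab)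

end Rescale

theorem mem_Icc_of_monotone {ψ : ℝ → ℝ} {a b : ℝ} (hmono : Monotone ψ) (h0 : ∀ t ≤ a, ψ t = 0)
    (h1 : ∀ t, b ≤ t → ψ t = ψ b) (t : ℝ) : ψ t ∈ Icc 0 (ψ b) :=
  ⟨h0 (min t a) (min_le_right t a) ▸ hmono (min_le_left t a),
    h1 (max t b) (le_max_right t b) ▸ hmono (le_max_left t b)⟩

structure IsMonotoneStep (ψ : ℝ → ℝ) (a b : ℝ) : Prop where
  contDiff : ContDiff ℝ 1 ψ
  monotone : Monotone ψ
  eq_zero : ∀ t ≤ a, ψ t = 0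
  eq_one : ∀ t, b ≤ t → ψ t = 1

namespace IsMonotoneStep

variable {ψ : ℝ → ℝ} {a b : ℝ}

theorem lt (hψ : IsMonotoneStep ψ a b) : a < b := by
  by_contra! h
  have := hψ.eq_one a h
  rw [hψ.eq_zero a le_rfl] at this
  exact zero_ne_one this

theorem mem_Icc (hψ : IsMonotoneStep ψ a b) (t : ℝ) : ψ t ∈ Icc 0 1 :=
  hψ.eq_one b le_rfl ▸ mem_Icc_of_monotone hψ.monotone hψ.eq_zero
    (fun t ht => by rw [hψ.eq_one t ht, hψ.eq_one b le_rfl]) t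

end IsMonotoneStep

def blend (ψ : ℝ → ℝ) (a b μ t : ℝ) : ℝ := (1 - μ) * ψ t + μ * Sfun (rescale a b t)

/-- Solves `Sfun ∘ h = blend ψ a b μ`. Since `Sinv` is not differentiable at `0` and `1`, `h` is
taken affine outside `[a, b]`, where `blend ψ a b μ` is `S` of an affine map. -/
def blendReparam (ψ : ℝ → ℝ) (a b μ t : ℝ) : ℝ :=
  if t ≤ a then -1 + √μ * (rescale a b t + 1)
  else if t < b then Sinv (blend ψ a b μ t)
  else 1 - √μ * (1 - rescale a b t)

section Blend

variable {ψ : ℝ → ℝ} {a b μ : ℝ}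

theorem blend_mem_Ioo (hψ : IsMonotoneStep ψ a b) (hμ : μ ∈ Ioo 0 1) {t : ℝ}
    (ht : t ∈ Ioo (a - 1) (b + 1)) : blend ψ a b μ t ∈ Ioo 0 1 := by
  obtain ⟨hψ₀, hψ₁⟩ := hψ.mem_Icc t
  obtain ⟨hS₀, hS₁⟩ := Sfun_mem_Ioo (rescale_mem_Ioo hψ.lt.le ht)
  obtain ⟨hμ₀, hμ₁⟩ := hμ
  constructor <;> unfold blend <;> nlinarith

theorem hasDerivAt_blend {t : ℝ} (hψ : DifferentiableAt ℝ ψ t) :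
    HasDerivAt (blend ψ a b μ)
      ((1 - μ) * deriv ψ t + μ * (deriv Sfun (rescale a b t) * (2 / (b - a + 2)))) t :=
  ((hψ.hasDerivAt.const_mul _).add
    (((contDiff_Sfun.differentiable one_ne_zero _).hasDerivAt.comp t
      (hasDerivAt_rescale t)).const_mul _))

theorem contDiff_blend (hψ : ContDiff ℝ 1 ψ) : ContDiff ℝ 1 (blend ψ a b μ) :=
  (contDiff_const.mul hψ).add (contDiff_const.mul (contDiff_Sfun.comp contDiff_rescale))

theorem deriv_blend_pos (hψ : IsMonotoneStep ψ a b) (hμ : μ ∈ Ioo 0 1) {t : ℝ}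
    (ht : t ∈ Ioo (a - 1) (b + 1)) : 0 < deriv (blend ψ a b μ) t := by
  rw [(hasDerivAt_blend (hψ.contDiff.differentiable one_ne_zero t)).deriv]
  have := hψ.monotone.deriv_nonneg (x := t)
  have := deriv_Sfun_pos (rescale_mem_Ioo hψ.lt.le ht)
  have : 0 < 2 / (b - a + 2) := div_pos two_pos (by linarith [hψ.lt])
  obtain ⟨hμ₀, hμ₁⟩ := hμ
  positivity

end Blend

section BlendReparam

variable {ψ : ℝ → ℝ} {a b μ : ℝ}

theorem blendReparam_of_le {t : ℝ} (ht : t ≤ a) :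
    blendReparam ψ a b μ t = -1 + √μ * (rescale a b t + 1) :=
  if_pos ht

theorem blendReparam_of_mem_Ioo {t : ℝ} (ht : t ∈ Ioo a b) :
    blendReparam ψ a b μ t = Sinv (blend ψ a b μ t) := by
  rw [blendReparam, if_neg (not_le.2 ht.1), if_pos ht.2]

theorem blendReparam_of_ge (hab : a < b) {t : ℝ} (ht : b ≤ t) :
    blendReparam ψ a b μ t = 1 - √μ * (1 - rescale a b t) := by
  rw [blendReparam, if_neg (by linarith), if_neg (not_lt.2 ht)]

variable (hψ : IsMonotoneStep ψ a b) (hμ : μ ∈ Ioo 0 1)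
include hψ hμ

theorem Sfun_blendReparam (t : ℝ) : Sfun (blendReparam ψ a b μ t) = blend ψ a b μ t := by
  have hab := hψ.lt
  rcases le_or_gt t a with hta | hta
  · have : rescale a b t ≤ 0 :=
      rescale_midpoint (a := a) (b := b) ▸ (strictMono_rescale hab.le).monotone (by linarith)
    rw [blendReparam_of_le hta, Sfun_neg_one_add_sqrt_mul this hμ.1.le hμ.2.le, blend,
      hψ.eq_zero t hta]
    ring
  rcases lt_or_ge t b with htb | htb
  · rw [blendReparam_of_mem_Ioo ⟨hta, htb⟩, Sfun_Sinv (Ioo_subset_Icc_self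
      (blend_mem_Ioo hψ hμ ⟨by linarith, by linarith⟩))]
  · have : 0 ≤ rescale a b t :=
      rescale_midpoint (a := a) (b := b) ▸ (strictMono_rescale hab.le).monotone (by linarith)
    rw [blendReparam_of_ge hab htb, Sfun_one_sub_sqrt_mul this hμ.1.le hμ.2.le, blend,
      hψ.eq_one t htb]
    ring

theorem blendReparam_mem_Icc {t : ℝ} (ht : t ∈ Ioo (a - 1) (b + 1)) :
    blendReparam ψ a b μ t ∈ Icc (-1) 1 := by
  have hab := hψ.lt
  have hs₀ : 0 < √μ := Real.sqrt_pos.2 hμ.1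
  have hs₁ : √μ < 1 := (Real.sqrt_lt' one_pos).2 (by linarith [hμ.2])
  obtain ⟨hr₀, hr₁⟩ := rescale_mem_Ioo hab.le ht
  rcases le_or_gt t a with hta | hta
  · rw [blendReparam_of_le hta]; constructor <;> nlinarith
  rcases lt_or_ge t b with htb | htb
  · rw [blendReparam_of_mem_Ioo ⟨hta, htb⟩]
    exact Ioo_subset_Icc_self (Sinv_mem_Ioo (blend_mem_Ioo hψ hμ ht))
  · rw [blendReparam_of_ge hab htb]; constructor <;> nlinarith

theorem blendReparam_eqOn :
    EqOn (blendReparam ψ a b μ) (Sinv ∘ blend ψ a b μ) (Ioo (a - 1) (b + 1)) := fun t ht => by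
  rw [Function.comp_apply, ← Sfun_blendReparam hψ hμ, Sinv_Sfun (blendReparam_mem_Icc hψ hμ ht)]

theorem blendReparam_exists_local_model (t : ℝ) :
    ∃ f : ℝ → ℝ, blendReparam ψ a b μ =ᶠ[𝓝 t] f ∧ ContDiffAt ℝ 1 f t ∧ 0 < deriv f t := by
  have hab := hψ.lt
  have hslope : 0 < √μ * (2 / (b - a + 2)) :=
    mul_pos (Real.sqrt_pos.2 hμ.1) (div_pos two_pos (by linarith))
  rcases lt_or_ge t a with hta | hta
  · refine ⟨fun s => -1 + √μ * (rescale a b s + 1), ?_, by fun_prop, ?_⟩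
    · filter_upwards [Iio_mem_nhds hta] with s hs using blendReparam_of_le hs.le
    · rwa [(((hasDerivAt_rescale t).add_const 1).const_mul √μ |>.const_add (-1)).deriv]
  rcases le_or_gt t b with htb | htb
  · have ht : t ∈ Ioo (a - 1) (b + 1) := ⟨by linarith, by linarith⟩
    have hy := blend_mem_Ioo hψ hμ ht
    refine ⟨Sinv ∘ blend ψ a b μ, ?_, ?_, ?_⟩
    · filter_upwards [Ioo_mem_nhds ht.1 ht.2] with s hs using blendReparam_eqOn hψ hμ hs
    · exact (contDiffOn_Sinv.contDiffAt (Ioo_mem_nhds hy.1 hy.2)).comp t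
        (contDiff_blend hψ.contDiff).contDiffAt
    · rw [((hasDerivAt_Sinv hy).comp t
        (contDiff_blend hψ.contDiff |>.differentiable one_ne_zero t).hasDerivAt).deriv]
      exact mul_pos (inv_pos.2 (deriv_Sfun_pos (Sinv_mem_Ioo hy))) (deriv_blend_pos hψ hμ ht)
  · refine ⟨fun s => 1 - √μ * (1 - rescale a b s), ?_, by fun_prop, ?_⟩
    · filter_upwards [Ioi_mem_nhds htb] with s hs using blendReparam_of_ge hab hs.le
    · rw [(((hasDerivAt_rescale t).const_sub 1).const_mul √μ |>.const_sub 1).deriv]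
      linarith

theorem contDiff_blendReparam : ContDiff ℝ 1 (blendReparam ψ a b μ) :=
  contDiff_iff_contDiffAt.2 fun t =>
    let ⟨_, hf, hC, _⟩ := blendReparam_exists_local_model hψ hμ t
    hC.congr_of_eventuallyEq hf

theorem deriv_blendReparam_pos (t : ℝ) : 0 < deriv (blendReparam ψ a b μ) t :=
  let ⟨_, hf, _, hpos⟩ := blendReparam_exists_local_model hψ hμ t
  hf.deriv_eq ▸ hpos

theorem opDiffeo_blendReparam : OPDiffeo (blendReparam ψ a b μ) := by
  have hab := hψ.lt
  have hs₀ : 0 < √μ := Real.sqrt_pos.2 hμ.1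
  refine .of_deriv_pos (contDiff_blendReparam hψ hμ) (deriv_blendReparam_pos hψ hμ) ?_ ?_
  · refine (tendsto_atTop_add_const_left _ (1 - √μ)
      ((tendsto_rescale_atTop hab.le).const_mul_atTop hs₀)).congr' ?_
    filter_upwards [eventually_ge_atTop b] with t ht
    rw [blendReparam_of_ge hab ht]; ring
  · refine (tendsto_atBot_add_const_left _ (√μ - 1)
      ((tendsto_rescale_atBot hab.le).const_mul_atBot hs₀)).congr' ?_
    filter_upwards [eventually_le_atBot a] with t ht
    rw [blendReparam_of_le ht]; ring

end BlendReparam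

theorem le_of_forall_one_sub_mul_le_one_add_mul {x y : ℝ}
    (h : ∀ μ ∈ Ioo (0 : ℝ) 1, (1 - μ) * x ≤ (1 + μ) * y) : x ≤ y := by
  have hx : Tendsto (fun μ : ℝ => (1 - μ) * x) (𝓝[>] 0) (𝓝 x) :=
    ((by fun_prop : Continuous fun μ : ℝ => (1 - μ) * x).tendsto' 0 x (by simp)).mono_left
      nhdsWithin_le_nhds
  have hy : Tendsto (fun μ : ℝ => (1 + μ) * y) (𝓝[>] 0) (𝓝 y) :=
    ((by fun_prop : Continuous fun μ : ℝ => (1 + μ) * y).tendsto' 0 y (by simp)).mono_left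
      nhdsWithin_le_nhds
  exact le_of_tendsto_of_tendsto hx hy (eventually_of_mem (Ioo_mem_nhdsGT one_pos) h)

theorem IsMonotoneStep.as1 {ψ : ℝ → ℝ} {a b : ℝ} (hψ : IsMonotoneStep ψ a b) : AS1 ψ :=
  ⟨hψ.contDiff, a, b, hψ.lt.le, hψ.eq_zero,
    fun t ht => by rw [hψ.eq_one t ht, hψ.eq_one b le_rfl]⟩

theorem as1_blend {ψ : ℝ → ℝ} {a b μ : ℝ} (hψ : IsMonotoneStep ψ a b) (hμ : μ ∈ Ioo 0 1) :
    AS1 (blend ψ a b μ) :=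
  funext (Sfun_blendReparam hψ hμ) ▸ as1_Sfun.comp_opDiffeo (opDiffeo_blendReparam hψ hμ)

namespace IsRPINorm

variable {N : (ℝ → ℝ) → ℝ} (hN : IsRPINorm N)
include hN

theorem norm_blend {ψ : ℝ → ℝ} {a b μ : ℝ} (hψ : IsMonotoneStep ψ a b) (hμ : μ ∈ Ioo 0 1) :
    N (blend ψ a b μ) = N Sfun := by
  rw [← hN.invariant Sfun _ as1_Sfun (opDiffeo_blendReparam hψ hμ)]
  exact congrArg N (funext (Sfun_blendReparam hψ hμ)).symm

theorem norm_eq_of_isMonotoneStep {ψ : ℝ → ℝ} {a b : ℝ} (hψ : IsMonotoneStep ψ a b) :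
    N ψ = N Sfun := by
  have hab := hψ.lt
  have hσ : AS1 (fun t => Sfun (rescale a b t)) :=
    as1_Sfun.comp_opDiffeo (opDiffeo_rescale hab.le)
  have hNσ (c : ℝ) : N (fun t => c * Sfun (rescale a b t)) = |c| * N Sfun := by
    rw [hN.smul c _ hσ, ← hN.invariant _ _ as1_Sfun (opDiffeo_rescale hab.le)]
    rfl
  have hNψ (μ : ℝ) (hμ : μ ∈ Ioo 0 1) : N (fun t => (1 - μ) * ψ t) = (1 - μ) * N ψ := by
    rw [hN.smul _ _ hψ.as1, abs_of_pos (sub_pos.2 hμ.2)]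
  have upper (μ : ℝ) (hμ : μ ∈ Ioo 0 1) : N Sfun ≤ (1 - μ) * N ψ + μ * N Sfun :=
    calc N Sfun = N (blend ψ a b μ) := (hN.norm_blend hψ hμ).symm
      _ ≤ N (fun t => (1 - μ) * ψ t) + N (fun t => μ * Sfun (rescale a b t)) :=
        hN.triangle _ _ (hψ.as1.const_mul _) (hσ.const_mul _)
      _ = (1 - μ) * N ψ + μ * N Sfun := by rw [hNψ μ hμ, hNσ, abs_of_pos hμ.1]
  have lower (μ : ℝ) (hμ : μ ∈ Ioo 0 1) : (1 - μ) * N ψ ≤ (1 + μ) * N Sfun :=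
    calc (1 - μ) * N ψ = N (fun t => blend ψ a b μ t + -μ * Sfun (rescale a b t)) := by
          rw [← hNψ μ hμ]; congr 1; ext t; simp only [blend]; ring
      _ ≤ N (blend ψ a b μ) + N (fun t => -μ * Sfun (rescale a b t)) :=
        hN.triangle _ _ (as1_blend hψ hμ) (hσ.const_mul _)
      _ = (1 + μ) * N Sfun := by
        rw [hN.norm_blend hψ hμ, hNσ, abs_neg, abs_of_pos hμ.1]; ring
  linarith [le_of_forall_one_sub_mul_le_one_add_mul lower, upper 2⁻¹ (by norm_num)]

theorem norm_eq_of_monotone {ψ : ℝ → ℝ} (hψ : AS1 ψ) (hmono : Monotone ψ) :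
    N ψ = (⨆ t, |ψ t|) * N Sfun := by
  have ⟨hC, a, b, hab, h0, h1⟩ := hψ
  have hmem := mem_Icc_of_monotone hmono h0 h1
  have hsup : ⨆ t, |ψ t| = ψ b :=
    ciSup_eq_of_forall_le_of_forall_lt_exists_gt
      (fun t => (abs_of_nonneg (hmem t).1).trans_le (hmem t).2)
      fun w hw => ⟨b, hw.trans_eq (abs_of_nonneg (hmem b).1).symm⟩
  rw [hsup]
  rcases (hmem b).1.eq_or_lt with hc | hc
  · rw [← hc, zero_mul, hN.eq_zero_iff ψ hψ]
    exact fun t => le_antisymm (hc ▸ (hmem t).2) (hmem t).1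
  have hstep : IsMonotoneStep (fun t => (ψ b)⁻¹ * ψ t) a b :=
    ⟨contDiff_const.mul hC, fun s t hst => mul_le_mul_of_nonneg_left (hmono hst) (by positivity),
      fun t ht => by simp [h0 t ht], fun t ht => by simp [h1 t ht, hc.ne']⟩
  calc N ψ = N (fun t => ψ b * ((ψ b)⁻¹ * ψ t)) := by simp [hc.ne']
    _ = ψ b * N Sfun := by
      rw [hN.smul _ _ (hψ.const_mul _), abs_of_pos hc, hN.norm_eq_of_isMonotoneStep hstep]

end IsRPINorm

theorem statement0 (N : (ℝ → ℝ) → ℝ) (hN : IsRPINorm N)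
    (ψ : ℝ → ℝ) (hψ : AS1 ψ) (hmono : Monotone ψ ∨ Antitone ψ) :
    N ψ = (⨆ t, |ψ t|) * N Sfun := by
  rcases hmono with hmono | hanti
  · exact hN.norm_eq_of_monotone hψ hmono
  · have h := hN.norm_eq_of_monotone (hψ.const_mul (-1)) fun s t hst => by simpa using hanti hst
    rw [hN.smul _ _ hψ] at h
    simpa using h
end
end

section
/- Let ‖·‖ be a reparametrization invariant norm on AS¹(ℝ). Let φ, ψ ∈ AS¹(ℝ) and suppose the supports of φ′ and ψ′ are both contained in a compact interval [a, b] with a ≠ b. If sup_t |φ′(t) − ψ′(t)| ≤ ε / ((b − a) · ‖S‖) for some ε > 0, then ‖φ − ψ‖ ≤ ε. -/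
open MeasureTheory Set

noncomputable section

namespace Aux2
open Filter

/-- derivative of `Sfun` -/
def Sder (t : ℝ) : ℝ :=
  if t ≤ -1 then 0 else if t ≤ 0 then t + 1 else if t ≤ 1 then 1 - t else 0

lemma Sfun_of_le (t : ℝ) (h : t ≤ -1) : Sfun t = 0 := if_pos h

lemma Sfun_of_mem1 (t : ℝ) (h1 : -1 ≤ t) (h2 : t ≤ 0) : Sfun t = (t + 1) ^ 2 / 2 := by
  unfold Sfun; split_ifs with h h' <;> nlinarith

lemma Sfun_of_mem2 (t : ℝ) (h1 : 0 ≤ t) (h2 : t ≤ 1) : Sfun t = 1 - (t - 1) ^ 2 / 2 := by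
  unfold Sfun; split_ifs with h h' h'' <;> nlinarith

lemma Sfun_of_ge (t : ℝ) (h : 1 ≤ t) : Sfun t = 1 := by
  unfold Sfun; split_ifs with h1 h2 h3 <;> nlinarith

lemma Sder_of_le (t : ℝ) (h : t ≤ -1) : Sder t = 0 := if_pos h

lemma Sder_of_mem1 (t : ℝ) (h1 : -1 ≤ t) (h2 : t ≤ 0) : Sder t = t + 1 := by
  unfold Sder; split_ifs with h h' <;> linarith

lemma Sder_of_mem2 (t : ℝ) (h1 : 0 ≤ t) (h2 : t ≤ 1) : Sder t = 1 - t := by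
  unfold Sder; split_ifs with h h' h'' <;> linarith

lemma Sder_of_ge (t : ℝ) (h : 1 ≤ t) : Sder t = 0 := by
  unfold Sder; split_ifs with h1 h2 h3 <;> linarith

lemma Sder_nonneg (t : ℝ) : 0 ≤ Sder t := by
  unfold Sder; split_ifs <;> linarith

lemma Sder_pos (t : ℝ) (h1 : -1 < t) (h2 : t < 1) : 0 < Sder t := by
  unfold Sder; split_ifs <;> linarith

lemma continuous_Sder : Continuous Sder := by
  unfold Sder
  apply Continuous.if_le
  · exact continuous_const
  · apply Continuous.if_le
    · continuity
    · apply Continuous.if_le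
      · continuity
      · exact continuous_const
      · exact continuous_id
      · exact continuous_const
      · intro x hx; rw [hx]; norm_num
    · exact continuous_id
    · exact continuous_const
    · intro x hx; rw [hx]; norm_num
  · exact continuous_id
  · exact continuous_const
  · intro x hx; rw [hx]; norm_num

/-- gluing lemma for `HasDerivAt` of piecewise functions -/
lemma glue {z f g : ℝ → ℝ} {t d : ℝ} {s₁ s₂ : Set ℝ}
    (hmem : s₁ ∪ s₂ ∈ nhds t) (ht1 : t ∈ s₁) (ht2 : t ∈ s₂)
    (hf : HasDerivAt f d t) (hg : HasDerivAt g d t)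
    (e₁ : ∀ s ∈ s₁, z s = f s) (e₂ : ∀ s ∈ s₂, z s = g s) :
    HasDerivAt z d t := by
  have h1 : HasDerivWithinAt z d s₁ t := (hf.hasDerivWithinAt).congr e₁ (e₁ t ht1)
  have h2 : HasDerivWithinAt z d s₂ t := (hg.hasDerivWithinAt).congr e₂ (e₂ t ht2)
  exact (h1.union h2).hasDerivAt hmem

lemma q1 (t : ℝ) : HasDerivAt (fun s : ℝ => (s + 1) ^ 2 / 2) (t + 1) t := by
  have h : HasDerivAt (fun s : ℝ => (s + 1) ^ 2 / 2) ((2 : ℕ) * (t + 1) ^ (2 - 1) * 1 / 2) t :=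
    (((hasDerivAt_id t).add_const 1).pow 2).div_const 2
  simpa using h

lemma q2 (t : ℝ) : HasDerivAt (fun s : ℝ => 1 - (s - 1) ^ 2 / 2) (1 - t) t := by
  have h : HasDerivAt (fun s : ℝ => (s - 1) ^ 2 / 2) ((2 : ℕ) * (t - 1) ^ (2 - 1) * 1 / 2) t :=
    (((hasDerivAt_id t).sub_const 1).pow 2).div_const 2
  have h2 := (hasDerivAt_const t (1 : ℝ)).sub h
  convert h2 using 1 <;> (try rfl); push_cast; ring

lemma hasDerivAt_Sfun (t : ℝ) : HasDerivAt Sfun (Sder t) t := by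
  rcases lt_trichotomy t (-1) with h | h | h
  · rw [Sder_of_le t h.le]
    have : Sfun =ᶠ[nhds t] (fun _ => (0 : ℝ)) :=
      eventually_of_mem (Iio_mem_nhds h) (fun s hs => Sfun_of_le s (le_of_lt hs))
    exact (this.hasDerivAt_iff).2 (hasDerivAt_const t 0)
  · subst h
    rw [Sder_of_le _ le_rfl]
    refine glue (f := fun _ => (0:ℝ)) (g := fun s => (s+1)^2/2) (s₁ := Iic (-1)) (s₂ := Icc (-1) 0)
      ?_ (mem_Iic.2 le_rfl) ⟨le_rfl, by norm_num⟩ (hasDerivAt_const _ 0) ?_ ?_ ?_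
    · rw [Iic_union_Icc_eq_Iic (by norm_num)]
      exact Iic_mem_nhds (by norm_num)
    · simpa using q1 (-1)
    · exact fun s hs => Sfun_of_le s hs
    · exact fun s hs => Sfun_of_mem1 s hs.1 hs.2
  · rcases lt_trichotomy t 0 with h0 | h0 | h0
    · rw [Sder_of_mem1 t h.le h0.le]
      have : Sfun =ᶠ[nhds t] (fun s => (s+1)^2/2) :=
        eventually_of_mem (Ioo_mem_nhds h h0)
          (fun s hs => Sfun_of_mem1 s hs.1.le hs.2.le)
      exact (this.hasDerivAt_iff).2 (q1 t)
    · subst h0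
      rw [Sder_of_mem1 0 (by norm_num) le_rfl]
      refine glue (f := fun s => (s+1)^2/2) (g := fun s => 1 - (s-1)^2/2)
        (s₁ := Icc (-1) 0) (s₂ := Icc 0 1) ?_ ⟨by norm_num, le_rfl⟩ ⟨le_rfl, by norm_num⟩
        ?_ ?_ ?_ ?_
      · rw [Icc_union_Icc_eq_Icc (by norm_num) (by norm_num)]
        exact Icc_mem_nhds (by norm_num) (by norm_num)
      · simpa using q1 0
      · simpa using q2 0
      · exact fun s hs => Sfun_of_mem1 s hs.1 hs.2
      · exact fun s hs => Sfun_of_mem2 s hs.1 hs.2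
    · rcases lt_trichotomy t 1 with h1 | h1 | h1
      · rw [Sder_of_mem2 t h0.le h1.le]
        have : Sfun =ᶠ[nhds t] (fun s => 1 - (s-1)^2/2) :=
          eventually_of_mem (Ioo_mem_nhds h0 h1)
            (fun s hs => Sfun_of_mem2 s hs.1.le hs.2.le)
        exact (this.hasDerivAt_iff).2 (q2 t)
      · subst h1
        rw [Sder_of_mem2 1 (by norm_num) le_rfl]
        refine glue (f := fun s => 1 - (s-1)^2/2) (g := fun _ => (1:ℝ))
          (s₁ := Icc 0 1) (s₂ := Ici 1) ?_ ⟨by norm_num, le_rfl⟩ (mem_Ici.2 le_rfl) ?_ ?_ ?_ ?_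
        · rw [Icc_union_Ici_eq_Ici (by norm_num)]
          exact Ici_mem_nhds (by norm_num)
        · simpa using q2 1
        · simpa using hasDerivAt_const (1:ℝ) (1:ℝ)
        · exact fun s hs => Sfun_of_mem2 s hs.1 hs.2
        · exact fun s hs => Sfun_of_ge s hs
      · rw [Sder_of_ge t h1.le]
        have : Sfun =ᶠ[nhds t] (fun _ => (1 : ℝ)) :=
          eventually_of_mem (Ioi_mem_nhds h1) (fun s hs => Sfun_of_ge s (le_of_lt hs))
        exact (this.hasDerivAt_iff).2 (hasDerivAt_const t 1)

lemma deriv_Sfun : deriv Sfun = Sder := funext fun t => (hasDerivAt_Sfun t).deriv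

lemma contDiff_Sfun : ContDiff ℝ 1 Sfun :=
  contDiff_one_iff_deriv.2 ⟨fun t => (hasDerivAt_Sfun t).differentiableAt,
    by rw [deriv_Sfun]; exact continuous_Sder⟩

lemma monotone_Sfun : Monotone Sfun :=
  monotone_of_deriv_nonneg (fun t => (hasDerivAt_Sfun t).differentiableAt)
    (by rw [deriv_Sfun]; exact Sder_nonneg)

lemma Sfun_nonneg (t : ℝ) : 0 ≤ Sfun t := by
  unfold Sfun; split_ifs <;> nlinarith

lemma Sfun_le_one (t : ℝ) : Sfun t ≤ 1 := by
  unfold Sfun; split_ifs <;> nlinarith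


/-- inverse of `Sfun` on `[0,1]` -/
def Sinv (u : ℝ) : ℝ := if u ≤ 1/2 then -1 + Real.sqrt (2*u) else 1 - Real.sqrt (2-2*u)

/-- derivative of `Sinv` on `(0,1)` -/
def dinv (u : ℝ) : ℝ := (Real.sqrt (2 * min u (1-u)))⁻¹

lemma Sinv_of_le (u : ℝ) (h : u ≤ 1/2) : Sinv u = -1 + Real.sqrt (2*u) := if_pos h

lemma Sinv_of_ge (u : ℝ) (h : 1/2 ≤ u) : Sinv u = 1 - Real.sqrt (2-2*u) := by
  unfold Sinv; split_ifs with h'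
  · have : u = 1/2 := le_antisymm h' h
    subst this; norm_num
  · rfl

lemma dinv_of_le (u : ℝ) (h : u ≤ 1/2) : dinv u = (Real.sqrt (2*u))⁻¹ := by
  unfold dinv; rw [min_eq_left (by linarith)]

lemma dinv_of_ge (u : ℝ) (h : 1/2 ≤ u) : dinv u = (Real.sqrt (2-2*u))⁻¹ := by
  unfold dinv; rw [min_eq_right (by linarith)]
  ring_nf

lemma dinv_pos (u : ℝ) (h0 : 0 < u) (h1 : u < 1) : 0 < dinv u := by
  unfold dinv
  have : 0 < min u (1-u) := lt_min h0 (by linarith)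
  positivity

lemma S_Sinv (u : ℝ) (h0 : 0 ≤ u) (h1 : u ≤ 1) : Sfun (Sinv u) = u := by
  rcases le_or_gt u (1/2) with h | h
  · rw [Sinv_of_le u h]
    have hs0 : 0 ≤ Real.sqrt (2*u) := Real.sqrt_nonneg _
    have hs1 : Real.sqrt (2*u) ≤ 1 := Real.sqrt_le_one.2 (by linarith)
    rw [Sfun_of_mem1 _ (by linarith) (by linarith)]
    have : (-1 + Real.sqrt (2*u) + 1) = Real.sqrt (2*u) := by ring
    rw [this, Real.sq_sqrt (by linarith)]
    ring
  · rw [Sinv_of_ge u h.le]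
    have hs0 : 0 ≤ Real.sqrt (2-2*u) := Real.sqrt_nonneg _
    have hs1 : Real.sqrt (2-2*u) ≤ 1 := Real.sqrt_le_one.2 (by linarith)
    rw [Sfun_of_mem2 _ (by linarith) (by linarith)]
    have : (1 - Real.sqrt (2-2*u) - 1)^2 = Real.sqrt (2-2*u)^2 := by ring
    rw [this, Real.sq_sqrt (by linarith)]
    ring

lemma continuous_Sinv : Continuous Sinv := by
  unfold Sinv
  apply Continuous.if_le
  · continuity
  · continuity
  · exact continuous_id
  · exact continuous_const
  · intro x hx; rw [hx]; norm_num

lemma hasDerivAt_sqrt_two_mul (u : ℝ) (hu : 0 < u) :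
    HasDerivAt (fun v : ℝ => Real.sqrt (2*v)) ((Real.sqrt (2*u))⁻¹) u := by
  have h1 : HasDerivAt (fun v : ℝ => (2:ℝ)*v) 2 u := by
    simpa using (hasDerivAt_id u).const_mul (2:ℝ)
  have h2 := (Real.hasDerivAt_sqrt (by positivity : (2:ℝ)*u ≠ 0)).comp u h1
  convert h2 using 1 <;> try rfl
  have : Real.sqrt (2*u) ≠ 0 := by positivity
  field_simp

lemma hasDerivAt_sqrt_two_sub (u : ℝ) (hu : u < 1) :
    HasDerivAt (fun v : ℝ => 1 - Real.sqrt (2-2*v)) ((Real.sqrt (2-2*u))⁻¹) u := by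
  have h1 : HasDerivAt (fun v : ℝ => (2:ℝ)-2*v) (-2) u := by
    simpa using ((hasDerivAt_id u).const_mul (2:ℝ)).const_sub (2:ℝ)
  have h2 := (Real.hasDerivAt_sqrt (by nlinarith : (2:ℝ)-2*u ≠ 0)).comp u h1
  have h3 := (hasDerivAt_const u (1:ℝ)).sub h2
  convert h3 using 1 <;> try rfl
  have : Real.sqrt (2-2*u) ≠ 0 := by
    have : (0:ℝ) < 2-2*u := by linarith
    positivity
  field_simp; ring

lemma hasDerivAt_Sinv (u : ℝ) (h0 : 0 < u) (h1 : u < 1) :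
    HasDerivAt Sinv (dinv u) u := by
  rcases lt_trichotomy u (1/2) with h | h | h
  · rw [dinv_of_le u h.le]
    have he : Sinv =ᶠ[nhds u] (fun v => -1 + Real.sqrt (2*v)) :=
      eventually_of_mem (Iio_mem_nhds h) (fun s hs => Sinv_of_le s (le_of_lt hs))
    exact (he.hasDerivAt_iff).2 (by simpa using (hasDerivAt_sqrt_two_mul u h0).const_add (-1))
  · subst h
    have hd : dinv (1/2 : ℝ) = 1 := by
      rw [dinv_of_le _ le_rfl]; norm_num
    rw [hd]
    refine glue (f := fun v => -1 + Real.sqrt (2*v)) (g := fun v => 1 - Real.sqrt (2-2*v))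
      (s₁ := Iic (1/2)) (s₂ := Ici (1/2)) ?_ (mem_Iic.2 le_rfl) (mem_Ici.2 le_rfl) ?_ ?_ ?_ ?_
    · rw [Iic_union_Ici]; exact univ_mem
    · have := (hasDerivAt_sqrt_two_mul (1/2 : ℝ) (by norm_num)).const_add (-1)
      norm_num at this ⊢
      convert this using 1
    · have := hasDerivAt_sqrt_two_sub (1/2 : ℝ) (by norm_num)
      norm_num at this ⊢
      convert this using 1
    · exact fun s hs => Sinv_of_le s hs
    · exact fun s hs => Sinv_of_ge s hs
  · rw [dinv_of_ge u h.le]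
    have he : Sinv =ᶠ[nhds u] (fun v => 1 - Real.sqrt (2-2*v)) :=
      eventually_of_mem (Ioi_mem_nhds h) (fun s hs => Sinv_of_ge s (le_of_lt hs))
    exact (he.hasDerivAt_iff).2 (hasDerivAt_sqrt_two_sub u h1)

lemma Sinv_mem (u : ℝ) (h0 : 0 < u) (h1 : u < 1) : -1 < Sinv u ∧ Sinv u < 1 := by
  rcases le_or_gt u (1/2) with h | h
  · rw [Sinv_of_le u h]
    have hs0 : 0 < Real.sqrt (2*u) := Real.sqrt_pos.2 (by linarith)
    have hs1 : Real.sqrt (2*u) ≤ 1 := Real.sqrt_le_one.2 (by linarith)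
    constructor <;> linarith
  · rw [Sinv_of_ge u h.le]
    have hs0 : 0 < Real.sqrt (2-2*u) := Real.sqrt_pos.2 (by linarith)
    have hs1 : Real.sqrt (2-2*u) ≤ 1 := Real.sqrt_le_one.2 (by linarith)
    constructor <;> linarith


lemma AS1_Sfun : AS1 Sfun :=
  ⟨contDiff_Sfun, -1, 1, by norm_num, fun t ht => Sfun_of_le t ht,
    fun t ht => by rw [Sfun_of_ge t ht, Sfun_of_ge 1 le_rfl]⟩

lemma AS1_zero : AS1 (fun _ => (0:ℝ)) :=
  ⟨contDiff_const, 0, 0, le_rfl, fun _ _ => rfl, fun _ _ => rfl⟩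

lemma AS1_mul (c : ℝ) {φ : ℝ → ℝ} (h : AS1 φ) : AS1 (fun t => c * φ t) := by
  obtain ⟨hc, a, b, hab, h0, h1⟩ := h
  refine ⟨contDiff_const.mul hc, a, b, hab, fun t ht => ?_, fun t ht => ?_⟩
  · show c * φ t = 0
    rw [h0 t ht, mul_zero]
  · show c * φ t = c * φ b
    rw [h1 t ht]

lemma OPDiffeo_affine (k r : ℝ) (hk : 0 < k) : OPDiffeo (fun t => k * t + r) := by
  have hd : ∀ t : ℝ, HasDerivAt (fun t => k * t + r) k t := fun t => by
    simpa using ((hasDerivAt_id t).const_mul k).add_const r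
  have hcd : ContDiff ℝ 1 (fun t : ℝ => k * t + r) :=
    (contDiff_const.mul contDiff_id).add contDiff_const
  have hinv : ∀ u : ℝ, k * ((u - r)/k) + r = u := fun u => by field_simp; ring
  refine ⟨hcd, ?_, ⟨fun u => (u - r)/k, ?_, ?_, ?_⟩, ?_⟩
  · constructor
    · intro x y hxy
      simp only at hxy
      have : k * x = k * y := by linarith
      exact mul_left_cancel₀ (ne_of_gt hk) this
    · intro u; exact ⟨(u - r)/k, hinv u⟩
  · exact (contDiff_id.sub contDiff_const).div_const k
  · intro t; simp only; field_simp; ring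
  · intro u; exact hinv u
  · intro t; rw [(hd t).deriv]; exact hk

/-- a continuous function vanishing on `Iio a` vanishes at `a`. -/
lemma cont_zero_left {f : ℝ → ℝ} (hf : Continuous f) {a : ℝ} (h : ∀ s < a, f s = 0) :
    f a = 0 := by
  have h1 : Tendsto f (nhdsWithin a (Iio a)) (nhds (f a)) :=
    (hf.continuousAt).continuousWithinAt.tendsto
  have h2 : Tendsto f (nhdsWithin a (Iio a)) (nhds 0) := by
    apply Tendsto.congr' _ tendsto_const_nhds
    exact eventually_of_mem self_mem_nhdsWithin (fun s hs => (h s hs).symm)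
  exact tendsto_nhds_unique h1 h2

lemma cont_zero_right {f : ℝ → ℝ} (hf : Continuous f) {b : ℝ} (h : ∀ s, b < s → f s = 0) :
    f b = 0 := by
  have h1 : Tendsto f (nhdsWithin b (Ioi b)) (nhds (f b)) :=
    (hf.continuousAt).continuousWithinAt.tendsto
  have h2 : Tendsto f (nhdsWithin b (Ioi b)) (nhds 0) := by
    apply Tendsto.congr' _ tendsto_const_nhds
    exact eventually_of_mem self_mem_nhdsWithin (fun s hs => (h s hs).symm)
  exact tendsto_nhds_unique h1 h2

section Mfacts
variable {a b : ℝ} {f : ℝ → ℝ}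

lemma m_hasDerivAt (hf : Continuous f) (t : ℝ) :
    HasDerivAt (fun u => ∫ s in a..u, f s) (f t) t :=
  intervalIntegral.integral_hasDerivAt_right (hf.intervalIntegrable a t)
    (hf.stronglyMeasurableAtFilter _ _) hf.continuousAt

lemma m_zero_left (hf : Continuous f)
    (hsupp : ∀ s, s < a ∨ b < s → f s = 0) (hfa : f a = 0) {t : ℝ} (ht : t ≤ a) :
    (∫ s in a..t, f s) = 0 := by
  have : EqOn f (fun _ => (0:ℝ)) (uIcc a t) := by
    intro s hs
    rw [uIcc_of_ge ht] at hs
    rcases lt_or_eq_of_le hs.2 with h | h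
    · exact hsupp s (Or.inl h)
    · rw [h]; exact hfa
  rw [intervalIntegral.integral_congr this]
  simp

lemma m_const_right (hab : a ≤ b) (hf : Continuous f)
    (hsupp : ∀ s, s < a ∨ b < s → f s = 0) (hfb : f b = 0) {t : ℝ} (ht : b ≤ t) :
    (∫ s in a..t, f s) = ∫ s in a..b, f s := by
  have key : (∫ s in b..t, f s) = 0 := by
    have : EqOn f (fun _ => (0:ℝ)) (uIcc b t) := by
      intro s hs
      rw [uIcc_of_le ht] at hs
      rcases lt_or_eq_of_le hs.1 with h | h
      · exact hsupp s (Or.inr h)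
      · rw [← h]; exact hfb
    rw [intervalIntegral.integral_congr this]
    simp
  have := intervalIntegral.integral_add_adjacent_intervals (μ := volume)
    (hf.intervalIntegrable a b) (hf.intervalIntegrable b t)
  rw [key] at this
  linarith

lemma m_monotone (hf : Continuous f) (hf0 : ∀ s, 0 ≤ f s) :
    Monotone (fun u => ∫ s in a..u, f s) := by
  apply monotone_of_deriv_nonneg
  · exact fun t => (m_hasDerivAt hf t).differentiableAt
  · intro t
    rw [(m_hasDerivAt hf t).deriv]
    exact hf0 t

lemma AS1_int (hab : a ≤ b) (hf : Continuous f)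
    (hsupp : ∀ s, s < a ∨ b < s → f s = 0) (hfa : f a = 0) (hfb : f b = 0) :
    AS1 (fun u => ∫ s in a..u, f s) := by
  refine ⟨?_, a, b, hab, fun t ht => m_zero_left hf hsupp hfa ht, ?_⟩
  · refine contDiff_one_iff_deriv.2 ⟨fun t => (m_hasDerivAt hf t).differentiableAt, ?_⟩
    have : deriv (fun u => ∫ s in a..u, f s) = f :=
      funext fun t => (m_hasDerivAt hf t).deriv
    rw [this]; exact hf
  · intro t ht
    show (∫ s in a..t, f s) = ∫ s in a..b, f s
    exact m_const_right hab hf hsupp hfb ht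

end Mfacts

set_option maxHeartbeats 2000000 in
lemma mono_bound (N : (ℝ → ℝ) → ℝ) (hN : IsRPINorm N) (a b : ℝ) (hab : a < b)
    (f : ℝ → ℝ) (hf : Continuous f) (hf0 : ∀ s, 0 ≤ f s)
    (hsupp : ∀ s, s < a ∨ b < s → f s = 0) (hfa : f a = 0) (hfb : f b = 0) :
    N (fun t => ∫ s in a..t, f s) ≤ (∫ s in a..b, f s) * N Sfun := by
  have hNS : 0 ≤ N Sfun := hN.nonneg _ AS1_Sfun
  set v : ℝ := ∫ s in a..b, f s with hv
  obtain ⟨m, hm⟩ : ∃ F : ℝ → ℝ, F = fun t => ∫ s in a..t, f s := ⟨_, rfl⟩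
  rw [← hm]
  have hv0 : 0 ≤ v := by
    rw [hv]; exact intervalIntegral.integral_nonneg hab.le (fun s _ => hf0 s)
  suffices key : ∀ c : ℝ, 0 < c → N m ≤ (v + 2*c) * N Sfun by
    refine le_of_forall_pos_le_add fun η hη => ?_
    have hden : (0:ℝ) < 2 * (N Sfun + 1) := by linarith
    set c := η / (2 * (N Sfun + 1)) with hc
    have hcpos : 0 < c := div_pos hη hden
    have hmul : c * (2 * (N Sfun + 1)) = η := div_mul_cancel₀ _ (ne_of_gt hden)
    have h2 : 2 * c * N Sfun ≤ η := by nlinarith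
    calc N m ≤ (v + 2*c) * N Sfun := key c hcpos
      _ = v * N Sfun + 2*c*N Sfun := by ring
      _ ≤ v * N Sfun + η := by linarith
  intro c hc
  -- basic data
  have hba : (0:ℝ) < b - a := by linarith
  set k : ℝ := 1 / (b - a) with hk
  have hkpos : 0 < k := by rw [hk]; positivity
  have hk1 : k * (b - a) = 1 := by rw [hk]; field_simp
  set r : ℝ := -(k * (a + b) / 2) with hr
  obtain ⟨haf, hhaf⟩ : ∃ F : ℝ → ℝ, F = fun t => k * t + r := ⟨_, rfl⟩
  have hafval : ∀ t, haf t = k * t + r := fun t => by rw [hhaf]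
  have hafd : ∀ t, HasDerivAt haf k t := fun t => by
    rw [hhaf]; simpa using ((hasDerivAt_id t).const_mul k).add_const r
  have hafa : haf a = -(1/2) := by
    rw [hafval, hr]; linear_combination (-(1:ℝ)/2) * hk1
  have hafb : haf b = 1/2 := by
    rw [hafval, hr]; linear_combination ((1:ℝ)/2) * hk1
  set p : ℝ := (3*a - b)/2 with hp
  set q : ℝ := (3*b - a)/2 with hq
  have hpa : p < a := by rw [hp]; linarith
  have hbq : b < q := by rw [hq]; linarith
  have hpq : p < q := by rw [hp, hq]; linarith
  have hafp : haf p = -1 := by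
    rw [hafval, hr, hp]; linear_combination (-(1:ℝ)) * hk1
  have hafq : haf q = 1 := by
    rw [hafval, hr, hq]; linear_combination hk1
  have hafm : ∀ x y : ℝ, x ≤ y → haf x ≤ haf y := fun x y hxy => by
    rw [hafval, hafval]; nlinarith [mul_nonneg hkpos.le (sub_nonneg.2 hxy)]
  have hafsm : ∀ x y : ℝ, x < y → haf x < haf y := fun x y hxy => by
    rw [hafval, hafval]; nlinarith [mul_pos hkpos (sub_pos.2 hxy)]
  have hafc : Continuous haf := by
    rw [hhaf]; exact (continuous_const.mul continuous_id).add continuous_const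
  set γ : ℝ := v + c with hγdef
  have hγ : 0 < γ := by rw [hγdef]; linarith
  have hcγ : c ≤ γ := by rw [hγdef]; linarith
  set ρ : ℝ := Real.sqrt (c/γ) with hρdef
  have hρpos : 0 < ρ := by rw [hρdef]; exact Real.sqrt_pos.2 (by positivity)
  have hρ1 : ρ ≤ 1 := by
    rw [hρdef]; exact Real.sqrt_le_one.2 ((div_le_one hγ).2 hcγ)
  have hρsq : ρ^2 = c/γ := by rw [hρdef]; exact Real.sq_sqrt (by positivity)
  have hcρ : c = ρ^2 * γ := by rw [hρsq]; field_simp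
  -- facts about m
  have hmd : ∀ t, HasDerivAt m (f t) t := fun t => by
    rw [hm]; exact m_hasDerivAt hf t
  have hm0 : ∀ t, t ≤ a → m t = 0 := fun t ht => by
    simp only [hm]; exact m_zero_left hf hsupp hfa ht
  have hmb : ∀ t, b ≤ t → m t = v := fun t ht => by
    simp only [hm, hv]; exact m_const_right hab.le hf hsupp hfb ht
  have hmmono : Monotone m := by rw [hm]; exact m_monotone hf hf0
  have hm_nn : ∀ t, 0 ≤ m t := fun t => by
    rcases le_total t a with h | h
    · rw [hm0 t h]
    · calc (0:ℝ) = m a := (hm0 a le_rfl).symm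
        _ ≤ m t := hmmono h
  have hm_le : ∀ t, m t ≤ v := fun t => by
    rcases le_total t b with h | h
    · calc m t ≤ m b := hmmono h
        _ = v := hmb b le_rfl
    · rw [hmb t h]
  -- the function g
  obtain ⟨g, hg⟩ : ∃ F : ℝ → ℝ, F = fun t => m t + c * Sfun (haf t) := ⟨_, rfl⟩
  have hgval : ∀ t, g t = m t + c * Sfun (haf t) := fun t => by rw [hg]
  obtain ⟨gd, hgdd⟩ : ∃ F : ℝ → ℝ, F = fun t => f t + c * (Sder (haf t) * k) := ⟨_, rfl⟩
  have hgdval : ∀ t, gd t = f t + c * (Sder (haf t) * k) := fun t => by rw [hgdd]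
  have hgd : ∀ t, HasDerivAt g (gd t) t := fun t => by
    rw [hg, hgdval]
    exact (hmd t).add (((hasDerivAt_Sfun (haf t)).comp t (hafd t)).const_mul c)
  have hgc : Continuous g := by
    have : Differentiable ℝ g := fun t => (hgd t).differentiableAt
    exact this.continuous
  have hgdc : Continuous gd := by
    rw [hgdd]
    exact hf.add (continuous_const.mul ((continuous_Sder.comp hafc).mul continuous_const))
  have hderivg : deriv g = gd := funext fun t => (hgd t).deriv
  have hg0 : ∀ t, t ≤ p → g t = 0 := fun t ht => by
    rw [hgval, hm0 t (le_trans ht hpa.le),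
      Sfun_of_le _ (by rw [← hafp]; exact hafm _ _ ht)]
    ring
  have hgγ : ∀ t, q ≤ t → g t = γ := fun t ht => by
    rw [hgval, hmb t (le_trans hbq.le ht),
      Sfun_of_ge _ (by rw [← hafq]; exact hafm _ _ ht), hγdef]
    ring
  have hg_nn : ∀ t, 0 ≤ g t := fun t => by
    rw [hgval]
    have h1 := Sfun_nonneg (haf t)
    have h2 : 0 ≤ c * Sfun (haf t) := mul_nonneg hc.le h1
    linarith [hm_nn t]
  have hg_le : ∀ t, g t ≤ γ := fun t => by
    rw [hgval, hγdef]
    have h1 := Sfun_le_one (haf t)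
    have h2 : c * Sfun (haf t) ≤ c * 1 := mul_le_mul_of_nonneg_left h1 hc.le
    linarith [hm_le t]
  -- derivative of g positive on Ioo p q
  have hgdpos : ∀ t, p < t → t < q → 0 < gd t := fun t h1 h2 => by
    rw [hgdval]
    have hx1 : -1 < haf t := by rw [← hafp]; exact hafsm _ _ h1
    have hx2 : haf t < 1 := by rw [← hafq]; exact hafsm _ _ h2
    have h3 := Sder_pos (haf t) hx1 hx2
    have h4 : 0 < c * (Sder (haf t) * k) := mul_pos hc (mul_pos h3 hkpos)
    linarith [hf0 t]
  have hsMg : StrictMonoOn g (Icc p q) := by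
    apply strictMonoOn_of_deriv_pos (convex_Icc p q) hgc.continuousOn
    intro x hx
    rw [interior_Icc] at hx
    rw [hderivg]
    exact hgdpos x hx.1 hx.2
  have hgin : ∀ t, p < t → t < q → 0 < g t ∧ g t < γ := fun t h1 h2 => by
    constructor
    · have := hsMg (left_mem_Icc.2 hpq.le) ⟨h1.le, h2.le⟩ h1
      rwa [hg0 p le_rfl] at this
    · have := hsMg ⟨h1.le, h2.le⟩ (right_mem_Icc.2 hpq.le) h2
      rwa [hgγ q le_rfl] at this
  -- the function H
  obtain ⟨H, hH⟩ : ∃ F : ℝ → ℝ, F = fun t => if t ≤ a then -1 + ρ * (haf t + 1)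
    else if t ≤ b then Sinv (g t / γ) else 1 - ρ * (1 - haf t) := ⟨_, rfl⟩
  have hHle : ∀ t, t ≤ a → H t = -1 + ρ * (haf t + 1) := fun t ht => by
    simp only [hH]; rw [if_pos ht]
  have hHmid : ∀ t, ¬(t ≤ a) → t ≤ b → H t = Sinv (g t / γ) := fun t ht ht' => by
    simp only [hH]; rw [if_neg ht, if_pos ht']
  have hHgt : ∀ t, ¬(t ≤ a) → ¬(t ≤ b) → H t = 1 - ρ * (1 - haf t) := fun t ht ht' => by
    simp only [hH]; rw [if_neg ht, if_neg ht']
  -- key identity K1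
  have K1 : ∀ t, γ * Sfun (H t) = g t := by
    intro t
    by_cases h1 : t ≤ a
    · rw [hHle t h1]
      by_cases h2 : t ≤ p
      · have hx : haf t ≤ -1 := by rw [← hafp]; exact hafm _ _ h2
        have hA : -1 + ρ * (haf t + 1) ≤ -1 := by
          have := mul_nonpos_of_nonneg_of_nonpos hρpos.le
            (by linarith : haf t + 1 ≤ 0)
          linarith
        rw [Sfun_of_le _ hA, hg0 t h2, mul_zero]
      · push_neg at h2
        have hx1 : -1 ≤ haf t := by rw [← hafp]; exact hafm _ _ h2.le
        have hx2 : haf t ≤ -(1/2) := by rw [← hafa]; exact hafm _ _ h1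
        have hA1 : -1 ≤ -1 + ρ * (haf t + 1) := by
          have := mul_nonneg hρpos.le (by linarith : (0:ℝ) ≤ haf t + 1)
          linarith
        have hA2 : -1 + ρ * (haf t + 1) ≤ 0 := by
          have := mul_le_mul_of_nonneg_right hρ1 (by linarith : (0:ℝ) ≤ haf t + 1)
          linarith
        rw [Sfun_of_mem1 _ hA1 hA2]
        have hgt : g t = c * ((haf t + 1)^2/2) := by
          rw [hgval, hm0 t h1, Sfun_of_mem1 _ hx1 (by linarith)]; ring
        rw [hgt]
        linear_combination (-(haf t + 1)^2/2) * hcρ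
    · push_neg at h1
      by_cases h2 : t ≤ b
      · rw [hHmid t (not_le.2 h1) h2]
        have hu0 : 0 ≤ g t / γ := div_nonneg (hg_nn t) hγ.le
        have hu1 : g t / γ ≤ 1 := (div_le_one hγ).2 (hg_le t)
        rw [S_Sinv _ hu0 hu1]
        field_simp
      · push_neg at h2
        rw [hHgt t (not_le.2 h1) (not_le.2 h2)]
        by_cases h3 : q ≤ t
        · have hx : 1 ≤ haf t := by rw [← hafq]; exact hafm _ _ h3
          have hA : 1 ≤ 1 - ρ * (1 - haf t) := by
            have := mul_nonpos_of_nonneg_of_nonpos hρpos.le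
              (by linarith : 1 - haf t ≤ 0)
            linarith
          rw [Sfun_of_ge _ hA, hgγ t h3, mul_one]
        · push_neg at h3
          have hx1 : haf t < 1 := by rw [← hafq]; exact hafsm _ _ h3
          have hx2 : 1/2 ≤ haf t := by rw [← hafb]; exact hafm _ _ h2.le
          have hA1 : 0 ≤ 1 - ρ * (1 - haf t) := by
            have := mul_le_mul_of_nonneg_right hρ1 (by linarith : (0:ℝ) ≤ 1 - haf t)
            have h5 : 1 * (1 - haf t) ≤ 1/2 := by linarith
            linarith
          have hA2 : 1 - ρ * (1 - haf t) ≤ 1 := by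
            have := mul_nonneg hρpos.le (by linarith : (0:ℝ) ≤ 1 - haf t)
            linarith
          rw [Sfun_of_mem2 _ hA1 hA2]
          have hgt : g t = v + c * (1 - (haf t - 1)^2/2) := by
            rw [hgval, hmb t h2.le, Sfun_of_mem2 _ (by linarith) hx1.le]
          rw [hgt]
          linear_combination hγdef + ((haf t - 1)^2/2) * hcρ
  -- K2 : on (p,q), H is Sinv ∘ (g/γ)
  have K2 : ∀ t, p < t → t < q → H t = Sinv (g t / γ) := by
    intro t hp1 hq1
    by_cases h1 : t ≤ a
    · rw [hHle t h1]
      have hx1 : -1 < haf t := by rw [← hafp]; exact hafsm _ _ hp1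
      have hx2 : haf t ≤ -(1/2) := by rw [← hafa]; exact hafm _ _ h1
      have hgt : g t = c * ((haf t + 1)^2/2) := by
        rw [hgval, hm0 t h1, Sfun_of_mem1 _ hx1.le (by linarith)]; ring
      have hsq4 : (haf t + 1)^2 ≤ 1/4 := by nlinarith
      have hu : g t / γ ≤ 1/2 := by
        rw [hgt, div_le_iff₀ hγ]
        have := mul_le_mul_of_nonneg_left hsq4 hc.le
        nlinarith
      rw [Sinv_of_le _ hu, hgt]
      have h2u : 2 * (c * ((haf t + 1)^2/2) / γ) = (c/γ) * (haf t + 1)^2 := by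
        field_simp
      rw [h2u, Real.sqrt_mul (by positivity) _, Real.sqrt_sq (by linarith), ← hρdef]
    · push_neg at h1
      by_cases h2 : t ≤ b
      · rw [hHmid t (not_le.2 h1) h2]
      · push_neg at h2
        rw [hHgt t (not_le.2 h1) (not_le.2 h2)]
        have hx1 : haf t < 1 := by rw [← hafq]; exact hafsm _ _ hq1
        have hx2 : 1/2 ≤ haf t := by rw [← hafb]; exact hafm _ _ h2.le
        have hgt : g t = v + c * (1 - (haf t - 1)^2/2) := by
          rw [hgval, hmb t h2.le, Sfun_of_mem2 _ (by linarith) hx1.le]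
        have hsq4 : (haf t - 1)^2 ≤ 1/4 := by nlinarith
        have hu : 1/2 ≤ g t / γ := by
          rw [hgt, le_div_iff₀ hγ, hγdef]
          have := mul_le_mul_of_nonneg_left hsq4 hc.le
          nlinarith
        rw [Sinv_of_ge _ hu]
        have h2u : 2 - 2 * (g t / γ) = (c/γ) * (1 - haf t)^2 := by
          rw [hgt]
          field_simp
          linear_combination (haf t - 1)^2 * hγdef
        rw [h2u, Real.sqrt_mul (by positivity) _, Real.sqrt_sq (by linarith), ← hρdef]
  -- full derivative of H on (p,q)
  obtain ⟨df, hdf⟩ : ∃ F : ℝ → ℝ, F = fun t => dinv (g t / γ) * (gd t / γ) := ⟨_, rfl⟩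
  have hdfval : ∀ t, df t = dinv (g t / γ) * (gd t / γ) := fun t => by rw [hdf]
  have K4 : ∀ t, p < t → t < q → HasDerivAt H (df t) t := by
    intro t h1 h2
    have hu0 : 0 < g t / γ := div_pos (hgin t h1 h2).1 hγ
    have hu1 : g t / γ < 1 := (div_lt_one hγ).2 (hgin t h1 h2).2
    have hcomp := (hasDerivAt_Sinv _ hu0 hu1).comp t ((hgd t).div_const γ)
    have he : (fun s => Sinv (g s / γ)) =ᶠ[nhds t] H :=
      eventually_of_mem (Ioo_mem_nhds h1 h2) (fun s hs => (K2 s hs.1 hs.2).symm)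
    rw [hdfval]
    exact (he.hasDerivAt_iff).1 hcomp
  -- boundary value of df
  have K5 : ∀ t, p < t → t < q → (t ≤ a ∨ b ≤ t) → df t = ρ * k := by
    intro t h1 h2 h3
    rcases h3 with h3 | h3
    · have hx1 : -1 < haf t := by rw [← hafp]; exact hafsm _ _ h1
      have hx2 : haf t ≤ -(1/2) := by rw [← hafa]; exact hafm _ _ h3
      have hgt : g t = c * ((haf t + 1)^2/2) := by
        rw [hgval, hm0 t h3, Sfun_of_mem1 _ hx1.le (by linarith)]; ring
      have hft : f t = 0 := by
        rcases lt_or_eq_of_le h3 with h | h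
        · exact hsupp t (Or.inl h)
        · rw [h]; exact hfa
      have hsq4 : (haf t + 1)^2 ≤ 1/4 := by nlinarith
      have hu : g t / γ ≤ 1/2 := by
        rw [hgt, div_le_iff₀ hγ]
        have := mul_le_mul_of_nonneg_left hsq4 hc.le
        nlinarith
      have hsq : Real.sqrt (2 * (g t / γ)) = ρ * (haf t + 1) := by
        have h2u : 2 * (g t / γ) = (c/γ) * (haf t + 1)^2 := by
          rw [hgt]; field_simp
        rw [h2u, Real.sqrt_mul (by positivity) _, Real.sqrt_sq (by linarith), ← hρdef]
      rw [hdfval, dinv_of_le _ hu, hsq, hgdval, hft,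
        Sder_of_mem1 _ hx1.le (by linarith : haf t ≤ 0)]
      have hne : haf t + 1 ≠ 0 := by intro hh; linarith
      rw [hcρ]
      field_simp
      ring
    · have hx1 : haf t < 1 := by rw [← hafq]; exact hafsm _ _ h2
      have hx2 : 1/2 ≤ haf t := by rw [← hafb]; exact hafm _ _ h3
      have hgt : g t = v + c * (1 - (haf t - 1)^2/2) := by
        rw [hgval, hmb t h3, Sfun_of_mem2 _ (by linarith) hx1.le]
      have hft : f t = 0 := by
        rcases lt_or_eq_of_le h3 with h | h
        · exact hsupp t (Or.inr h)
        · rw [← h]; exact hfb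
      have hsq4 : (haf t - 1)^2 ≤ 1/4 := by nlinarith
      have hu : 1/2 ≤ g t / γ := by
        rw [hgt, le_div_iff₀ hγ, hγdef]
        have := mul_le_mul_of_nonneg_left hsq4 hc.le
        nlinarith
      have hsq : Real.sqrt (2 - 2 * (g t / γ)) = ρ * (1 - haf t) := by
        have h2u : 2 - 2 * (g t / γ) = (c/γ) * (1 - haf t)^2 := by
          rw [hgt]
          field_simp
          linear_combination (haf t - 1)^2 * hγdef
        rw [h2u, Real.sqrt_mul (by positivity) _, Real.sqrt_sq (by linarith), ← hρdef]
      rw [hdfval, dinv_of_ge _ hu, hsq, hgdval, hft,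
        Sder_of_mem2 _ (by linarith : (0:ℝ) ≤ haf t) hx1.le]
      have hne : 1 - haf t ≠ 0 := by intro hh; linarith
      rw [hcρ]
      field_simp
      ring
  -- global derivative D of H
  obtain ⟨D, hD⟩ : ∃ F : ℝ → ℝ, F = fun t => if a < t ∧ t < b then df t else ρ * k :=
    ⟨_, rfl⟩
  have hDval1 : ∀ t, a < t → t < b → D t = df t := fun t h1 h2 => by
    simp only [hD]; rw [if_pos ⟨h1, h2⟩]
  have hDval2 : ∀ t, ¬(a < t ∧ t < b) → D t = ρ * k := fun t h => by
    simp only [hD]; rw [if_neg h]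
  have hDdf : ∀ t, p < t → t < q → D t = df t := by
    intro t h1 h2
    by_cases h : a < t ∧ t < b
    · exact hDval1 t h.1 h.2
    · rw [hDval2 t h, K5 t h1 h2 ?_]
      rcases not_and_or.1 h with h' | h'
      · exact Or.inl (not_lt.1 h')
      · exact Or.inr (not_lt.1 h')
  -- A1 and A2 derivative helpers
  have hA1d : ∀ t, HasDerivAt (fun s => -1 + ρ * (haf s + 1)) (ρ * k) t := fun t =>
    (((hafd t).add_const 1).const_mul ρ).const_add (-1)
  have hA2d : ∀ t, HasDerivAt (fun s => 1 - ρ * (1 - haf s)) (ρ * k) t := fun t => by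
    have h0 := (((hafd t).const_sub 1).const_mul ρ).const_sub 1
    convert h0 using 1 <;> try rfl
    ring
  -- H has derivative D everywhere
  have K6 : ∀ t, HasDerivAt H (D t) t := by
    intro t
    rcases lt_or_ge t a with h | h
    · by_cases h' : p < t
      · have h9 := K4 t h' (by linarith : t < q)
        rwa [← hDdf t h' (by linarith)] at h9
      · push_neg at h'
        rw [hDval2 t (by push_neg; intro h1; linarith)]
        have he : (fun s => -1 + ρ * (haf s + 1)) =ᶠ[nhds t] H :=
          eventually_of_mem (Iio_mem_nhds (by linarith : t < a))
            (fun s hs => (hHle s (le_of_lt hs)).symm)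
        exact (he.hasDerivAt_iff).1 (hA1d t)
    · rcases le_or_gt t b with h2 | h2
      · have h9 := K4 t (by linarith) (by linarith)
        rwa [← hDdf t (by linarith) (by linarith)] at h9
      · by_cases h' : t < q
        · have h9 := K4 t (by linarith) h'
          rwa [← hDdf t (by linarith) h'] at h9
        · push_neg at h'
          rw [hDval2 t (by push_neg; intro _; linarith)]
          have he : (fun s => 1 - ρ * (1 - haf s)) =ᶠ[nhds t] H :=
            eventually_of_mem (Ioi_mem_nhds (by linarith : b < t))
              (fun s hs => (hHgt s (by simp only [mem_Ioi] at hs; intro hh; linarith)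
                (by simp only [mem_Ioi] at hs; intro hh; linarith)).symm)
          exact (he.hasDerivAt_iff).1 (hA2d t)
  -- positivity of D
  have K8 : ∀ t, 0 < D t := by
    intro t
    by_cases h : a < t ∧ t < b
    · rw [hDval1 t h.1 h.2, hdfval]
      have h1 : p < t := by linarith [h.1]
      have h2 : t < q := by linarith [h.2]
      have hu0 : 0 < g t / γ := div_pos (hgin t h1 h2).1 hγ
      have hu1 : g t / γ < 1 := (div_lt_one hγ).2 (hgin t h1 h2).2
      exact mul_pos (dinv_pos _ hu0 hu1) (div_pos (hgdpos t h1 h2) hγ)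
    · rw [hDval2 t h]
      exact mul_pos hρpos hkpos
  -- continuity of D
  have K7 : Continuous D := by
    rw [continuous_iff_continuousAt]
    intro t
    by_cases hin : p < t ∧ t < q
    · have hdfc : ContinuousAt df t := by
        rw [hdf]
        apply ContinuousAt.mul
        · have hu0 : 0 < g t / γ := div_pos (hgin t hin.1 hin.2).1 hγ
          have hu1 : g t / γ < 1 := (div_lt_one hγ).2 (hgin t hin.1 hin.2).2
          have hgc' : ContinuousAt (fun s => g s / γ) t := (hgc.continuousAt).div_const γ
          have hcont2 : ContinuousAt dinv (g t / γ) := by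
            unfold dinv
            apply ContinuousAt.inv₀
            · apply Continuous.continuousAt
              have h5 : Continuous (fun u : ℝ => 2 * min u (1 - u)) :=
                continuous_const.mul (continuous_id.min (continuous_const.sub continuous_id))
              exact Real.continuous_sqrt.comp h5
            · have : 0 < min (g t / γ) (1 - g t / γ) := lt_min hu0 (by linarith)
              positivity
          exact ContinuousAt.comp (g := dinv) (f := fun s => g s / γ) hcont2 hgc'
        · exact (hgdc.continuousAt).div_const γ
      have he : df =ᶠ[nhds t] D :=
        eventually_of_mem (Ioo_mem_nhds hin.1 hin.2)
          (fun s hs => (hDdf s hs.1 hs.2).symm)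
      exact hdfc.congr he
    · rcases not_and_or.1 hin with h' | h'
      · push_neg at h'
        have he : (fun _ : ℝ => ρ * k) =ᶠ[nhds t] D :=
          eventually_of_mem (Iio_mem_nhds (by linarith : t < a))
            (fun s hs => (hDval2 s (by
              simp only [mem_Iio] at hs
              push_neg
              intro h1; linarith)).symm)
        exact continuousAt_const.congr he
      · push_neg at h'
        have he : (fun _ : ℝ => ρ * k) =ᶠ[nhds t] D :=
          eventually_of_mem (Ioi_mem_nhds (by linarith : b < t))
            (fun s hs => (hDval2 s (by
              simp only [mem_Ioi] at hs
              push_neg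
              intro _; linarith)).symm)
        exact continuousAt_const.congr he
  -- H is a C¹ diffeomorphism
  have hderivH : deriv H = D := funext fun t => (K6 t).deriv
  have hHdiff : Differentiable ℝ H := fun t => (K6 t).differentiableAt
  have contH : Continuous H := hHdiff.continuous
  have cdH : ContDiff ℝ 1 H := contDiff_one_iff_deriv.2 ⟨hHdiff, by rw [hderivH]; exact K7⟩
  have smH : StrictMono H := strictMono_of_deriv_pos (fun t => by rw [hderivH]; exact K8 t)
  have surjH : Function.Surjective H := by
    apply Continuous.surjective contH
    · apply Filter.Tendsto.congr' (f₁ := fun s => (ρ*k) * s + (1 - ρ * (1 - r)))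
      · filter_upwards [Filter.eventually_ge_atTop (b+1)] with s hs
        rw [hHgt s (by intro hh; linarith) (by intro hh; linarith), hafval]
        ring
      · exact Filter.tendsto_atTop_add_const_right _ _
          (Filter.Tendsto.const_mul_atTop (mul_pos hρpos hkpos) tendsto_id)
    · apply Filter.Tendsto.congr' (f₁ := fun s => (ρ*k) * s + (ρ * (r + 1) - 1))
      · filter_upwards [Filter.eventually_le_atBot a] with s hs
        rw [hHle s hs, hafval]
        ring
      · exact Filter.tendsto_atBot_add_const_right _ _
          (Filter.Tendsto.const_mul_atBot (mul_pos hρpos hkpos) tendsto_id)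
  set e := StrictMono.orderIsoOfSurjective H smH surjH with hedef
  have hecoe : ⇑e = H := StrictMono.coe_orderIsoOfSurjective H smH surjH
  obtain ⟨G, hG⟩ : ∃ F : ℝ → ℝ, F = fun u => e.symm u := ⟨_, rfl⟩
  have hGH : Function.LeftInverse G H := by
    intro t
    have h1 : e t = H t := by rw [hecoe]
    rw [hG]
    show e.symm (H t) = t
    rw [← h1, OrderIso.symm_apply_apply]
  have hHG : Function.RightInverse G H := by
    intro u
    have h2 := e.apply_symm_apply u
    rw [hecoe] at h2
    rw [hG]
    exact h2
  have contG : Continuous G := by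
    rw [hG]
    exact OrderIso.continuous e.symm
  have GhasDeriv : ∀ u, HasDerivAt G ((D (G u))⁻¹) u := fun u =>
    HasDerivAt.of_local_left_inverse contG.continuousAt (K6 (G u))
      (ne_of_gt (K8 (G u))) (Filter.Eventually.of_forall hHG)
  have cdG : ContDiff ℝ 1 G := by
    refine contDiff_one_iff_deriv.2 ⟨fun u => (GhasDeriv u).differentiableAt, ?_⟩
    have hdG : deriv G = fun u => (D (G u))⁻¹ := funext fun u => (GhasDeriv u).deriv
    rw [hdG]
    exact ((K7.comp contG).inv₀ (fun u => ne_of_gt (K8 (G u))))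
  have OPH : OPDiffeo H :=
    ⟨cdH, ⟨smH.injective, surjH⟩, ⟨G, cdG, hGH, hHG⟩,
      fun t => by rw [hderivH]; exact K8 t⟩
  have OPhaf : OPDiffeo haf := by rw [hhaf]; exact OPDiffeo_affine k r hkpos
  -- AS1 facts
  have hafcd : ContDiff ℝ 1 haf := by
    rw [hhaf]; exact (contDiff_const.mul contDiff_id).add contDiff_const
  have AS1_SH : AS1 (fun t => Sfun (H t)) := by
    refine ⟨contDiff_Sfun.comp cdH, p, q, hpq.le, ?_, ?_⟩
    · intro t ht
      show Sfun (H t) = 0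
      have hx : haf t ≤ -1 := by rw [← hafp]; exact hafm _ _ ht
      rw [hHle t (by linarith)]
      refine Sfun_of_le _ ?_
      have := mul_nonpos_of_nonneg_of_nonpos hρpos.le (by linarith : haf t + 1 ≤ 0)
      linarith
    · have hq1 : ∀ t, q ≤ t → Sfun (H t) = 1 := by
        intro t ht
        have hx : 1 ≤ haf t := by rw [← hafq]; exact hafm _ _ ht
        rw [hHgt t (by intro hh; linarith) (by intro hh; linarith)]
        refine Sfun_of_ge _ ?_
        have := mul_nonpos_of_nonneg_of_nonpos hρpos.le (by linarith : 1 - haf t ≤ 0)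
        linarith
      intro t ht
      show Sfun (H t) = Sfun (H q)
      rw [hq1 t ht, hq1 q le_rfl]
  have AS1_Shaf : AS1 (fun t => Sfun (haf t)) := by
    refine ⟨contDiff_Sfun.comp hafcd, p, q, hpq.le, ?_, ?_⟩
    · intro t ht
      show Sfun (haf t) = 0
      exact Sfun_of_le _ (by rw [← hafp]; exact hafm _ _ ht)
    · intro t ht
      show Sfun (haf t) = Sfun (haf q)
      rw [Sfun_of_ge _ (by rw [← hafq]; exact hafm _ _ ht),
        Sfun_of_ge _ (le_of_eq hafq.symm)]
  -- the norm computation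
  have hfeq : m = fun t => γ * Sfun (H t) + (-c) * Sfun (haf t) := by
    funext t
    have h1 := K1 t
    rw [hgval] at h1
    linarith
  have step1 : N m ≤ N (fun t => γ * Sfun (H t)) + N (fun t => (-c) * Sfun (haf t)) := by
    rw [hfeq]
    exact hN.triangle _ _ (AS1_mul γ AS1_SH) (AS1_mul (-c) AS1_Shaf)
  have step2 : N (fun t => γ * Sfun (H t)) = γ * N Sfun := by
    have h1 : N (fun t => Sfun (H t)) = N Sfun := hN.invariant Sfun H AS1_Sfun OPH
    rw [hN.smul γ _ AS1_SH, h1, abs_of_pos hγ]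
  have step3 : N (fun t => (-c) * Sfun (haf t)) = c * N Sfun := by
    have h1 : N (fun t => Sfun (haf t)) = N Sfun := hN.invariant Sfun haf AS1_Sfun OPhaf
    rw [hN.smul (-c) _ AS1_Shaf, h1, abs_neg, abs_of_pos hc]
  calc N m ≤ N (fun t => γ * Sfun (H t)) + N (fun t => (-c) * Sfun (haf t)) := step1
    _ = γ * N Sfun + c * N Sfun := by rw [step2, step3]
    _ = (v + 2*c) * N Sfun := by rw [hγdef]; ring


end Aux2

theorem statement2 (N : (ℝ → ℝ) → ℝ) (hN : IsRPINorm N)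
    (φ ψ : ℝ → ℝ) (hφ : AS1 φ) (hψ : AS1 ψ)
    (a b ε : ℝ) (hab : a ≠ b) (hε : 0 < ε)
    (hsφ : Function.support (deriv φ) ⊆ Set.Icc a b)
    (hsψ : Function.support (deriv ψ) ⊆ Set.Icc a b)
    (hd : ∀ t, |deriv φ t - deriv ψ t| ≤ ε / ((b - a) * N Sfun)) :
    N (fun t => φ t - ψ t) ≤ ε := by
  classical
  open Aux2 in
  obtain ⟨hφc, aφ, bφ, habφ, hφ0, hφconst⟩ := hφ
  obtain ⟨hψc, aψ, bψ, habψ, hψ0, hψconst⟩ := hψ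
  have hφdiff : Differentiable ℝ φ := hφc.differentiable one_ne_zero
  have hψdiff : Differentiable ℝ ψ := hψc.differentiable one_ne_zero
  have hφd : Continuous (deriv φ) := hφc.continuous_deriv le_rfl
  have hψd : Continuous (deriv ψ) := hψc.continuous_deriv le_rfl
  have hsφ' : ∀ s, s < a ∨ b < s → deriv φ s = 0 := by
    intro s hs
    by_contra hne
    have hmem := hsφ (Function.mem_support.2 hne)
    rw [Set.mem_Icc] at hmem
    rcases hs with h | h
    · linarith [hmem.1]
    · linarith [hmem.2]
  have hsψ' : ∀ s, s < a ∨ b < s → deriv ψ s = 0 := by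
    intro s hs
    by_contra hne
    have hmem := hsψ (Function.mem_support.2 hne)
    rw [Set.mem_Icc] at hmem
    rcases hs with h | h
    · linarith [hmem.1]
    · linarith [hmem.2]
  rcases lt_or_ge b a with hba | hba
  · -- degenerate case : both functions are identically 0
    have hall : ∀ s : ℝ, s < a ∨ b < s := fun s => by
      rcases lt_or_ge s a with h | h
      · exact Or.inl h
      · exact Or.inr (lt_of_lt_of_le hba h)
    have hφz : ∀ t, φ t = 0 := fun t => by
      have hconst := is_const_of_deriv_eq_zero hφdiff (fun s => hsφ' s (hall s)) t aφ
      rw [hconst, hφ0 aφ le_rfl]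
    have hψz : ∀ t, ψ t = 0 := fun t => by
      have hconst := is_const_of_deriv_eq_zero hψdiff (fun s => hsψ' s (hall s)) t aψ
      rw [hconst, hψ0 aψ le_rfl]
    have hzero : (fun t => φ t - ψ t) = fun _ => (0:ℝ) := funext fun t => by
      rw [hφz t, hψz t]; ring
    rw [hzero, (hN.eq_zero_iff _ AS1_zero).2 (fun t => rfl)]
    exact hε.le
  have hab' : a < b := lt_of_le_of_ne hba hab
  set M : ℝ := ε / ((b - a) * N Sfun) with hM
  have hφa : deriv φ a = 0 := cont_zero_left hφd (fun s hs => hsφ' s (Or.inl hs))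
  have hψa : deriv ψ a = 0 := cont_zero_left hψd (fun s hs => hsψ' s (Or.inl hs))
  have hφb : deriv φ b = 0 := cont_zero_right hφd (fun s hs => hsφ' s (Or.inr hs))
  have hψb : deriv ψ b = 0 := cont_zero_right hψd (fun s hs => hsψ' s (Or.inr hs))
  obtain ⟨w, hw⟩ : ∃ F : ℝ → ℝ, F = fun t => deriv φ t - deriv ψ t := ⟨_, rfl⟩
  have hwval : ∀ t, w t = deriv φ t - deriv ψ t := fun t => by rw [hw]
  have hwc : Continuous w := by rw [hw]; exact hφd.sub hψd
  have hwsupp : ∀ s, s < a ∨ b < s → w s = 0 := fun s hs => by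
    rw [hwval, hsφ' s hs, hsψ' s hs]; ring
  have hwa : w a = 0 := by rw [hwval, hφa, hψa]; ring
  have hwb : w b = 0 := by rw [hwval, hφb, hψb]; ring
  obtain ⟨fp, hfp⟩ : ∃ F : ℝ → ℝ, F = fun t => max (w t) 0 := ⟨_, rfl⟩
  obtain ⟨fm, hfm⟩ : ∃ F : ℝ → ℝ, F = fun t => max (-(w t)) 0 := ⟨_, rfl⟩
  have hfpval : ∀ t, fp t = max (w t) 0 := fun t => by rw [hfp]
  have hfmval : ∀ t, fm t = max (-(w t)) 0 := fun t => by rw [hfm]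
  have hfpc : Continuous fp := by rw [hfp]; exact hwc.max continuous_const
  have hfmc : Continuous fm := by rw [hfm]; exact hwc.neg.max continuous_const
  have hfp0 : ∀ s, 0 ≤ fp s := fun s => by rw [hfpval]; exact le_max_right _ _
  have hfm0 : ∀ s, 0 ≤ fm s := fun s => by rw [hfmval]; exact le_max_right _ _
  have hfpsupp : ∀ s, s < a ∨ b < s → fp s = 0 := fun s hs => by
    rw [hfpval, hwsupp s hs]; simp
  have hfmsupp : ∀ s, s < a ∨ b < s → fm s = 0 := fun s hs => by
    rw [hfmval, hwsupp s hs]; simp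
  have hfpa : fp a = 0 := by rw [hfpval, hwa]; simp
  have hfpb : fp b = 0 := by rw [hfpval, hwb]; simp
  have hfma : fm a = 0 := by rw [hfmval, hwa]; simp
  have hfmb : fm b = 0 := by rw [hfmval, hwb]; simp
  -- values at a
  have hφaval : φ a = 0 := by
    have h0 : φ (min a aφ) = 0 := hφ0 _ (min_le_right _ _)
    have hint : (∫ s in (min a aφ)..a, deriv φ s) = φ a - φ (min a aφ) :=
      intervalIntegral.integral_deriv_eq_sub (fun x _ => hφdiff x)
        (hφd.intervalIntegrable _ _)
    have hz : (∫ s in (min a aφ)..a, deriv φ s) = 0 := by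
      have heq : EqOn (deriv φ) (fun _ => (0:ℝ)) (uIcc (min a aφ) a) := by
        intro s hs
        rw [uIcc_of_le (min_le_left _ _)] at hs
        rcases lt_or_eq_of_le hs.2 with h | h
        · exact hsφ' s (Or.inl h)
        · rw [h]; exact hφa
      rw [intervalIntegral.integral_congr heq]; simp
    rw [hint] at hz
    linarith
  have hψaval : ψ a = 0 := by
    have h0 : ψ (min a aψ) = 0 := hψ0 _ (min_le_right _ _)
    have hint : (∫ s in (min a aψ)..a, deriv ψ s) = ψ a - ψ (min a aψ) :=
      intervalIntegral.integral_deriv_eq_sub (fun x _ => hψdiff x)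
        (hψd.intervalIntegrable _ _)
    have hz : (∫ s in (min a aψ)..a, deriv ψ s) = 0 := by
      have heq : EqOn (deriv ψ) (fun _ => (0:ℝ)) (uIcc (min a aψ) a) := by
        intro s hs
        rw [uIcc_of_le (min_le_left _ _)] at hs
        rcases lt_or_eq_of_le hs.2 with h | h
        · exact hsψ' s (Or.inl h)
        · rw [h]; exact hψa
      rw [intervalIntegral.integral_congr heq]; simp
    rw [hint] at hz
    linarith
  -- FTC identity
  have hFTC : ∀ t, φ t - ψ t = (∫ s in a..t, fp s) - (∫ s in a..t, fm s) := by
    intro t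
    have h1 : (∫ s in a..t, deriv φ s) = φ t - φ a :=
      intervalIntegral.integral_deriv_eq_sub (fun x _ => hφdiff x)
        (hφd.intervalIntegrable _ _)
    have h2 : (∫ s in a..t, deriv ψ s) = ψ t - ψ a :=
      intervalIntegral.integral_deriv_eq_sub (fun x _ => hψdiff x)
        (hψd.intervalIntegrable _ _)
    have h3 : (∫ s in a..t, fp s) - (∫ s in a..t, fm s)
        = ∫ s in a..t, (fp s - fm s) :=
      (intervalIntegral.integral_sub (hfpc.intervalIntegrable _ _)
        (hfmc.intervalIntegrable _ _)).symm
    have h4 : ∀ s, fp s - fm s = w s := fun s => by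
      rw [hfpval, hfmval]
      exact max_zero_sub_eq_self (w s)
    have h5 : (∫ s in a..t, (fp s - fm s)) = ∫ s in a..t, (deriv φ s - deriv ψ s) := by
      apply intervalIntegral.integral_congr
      intro s _
      show fp s - fm s = deriv φ s - deriv ψ s
      rw [h4 s, hwval]
    have h6 : (∫ s in a..t, (deriv φ s - deriv ψ s))
        = (∫ s in a..t, deriv φ s) - (∫ s in a..t, deriv ψ s) :=
      intervalIntegral.integral_sub (hφd.intervalIntegrable _ _)
        (hψd.intervalIntegrable _ _)
    rw [h3, h5, h6, h1, h2, hφaval, hψaval]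
    ring
  have hiden : (fun t => φ t - ψ t)
      = fun t => (∫ s in a..t, fp s) + (-1 : ℝ) * (∫ s in a..t, fm s) :=
    funext fun t => by rw [hFTC t]; ring
  rw [hiden]
  have hA1 : AS1 (fun t => ∫ s in a..t, fp s) := AS1_int hab'.le hfpc hfpsupp hfpa hfpb
  have hA2 : AS1 (fun t => ∫ s in a..t, fm s) := AS1_int hab'.le hfmc hfmsupp hfma hfmb
  have step1 : N (fun t => (∫ s in a..t, fp s) + (-1 : ℝ) * (∫ s in a..t, fm s))
      ≤ N (fun t => ∫ s in a..t, fp s) + N (fun t => (-1 : ℝ) * (∫ s in a..t, fm s)) :=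
    hN.triangle _ _ hA1 (AS1_mul (-1) hA2)
  have step2 : N (fun t => (-1 : ℝ) * (∫ s in a..t, fm s)) = N (fun t => ∫ s in a..t, fm s) := by
    rw [hN.smul (-1) _ hA2]
    simp
  have b1 := mono_bound N hN a b hab' fp hfpc hfp0 hfpsupp hfpa hfpb
  have b2 := mono_bound N hN a b hab' fm hfmc hfm0 hfmsupp hfma hfmb
  have hNS : 0 ≤ N Sfun := hN.nonneg _ AS1_Sfun
  have hVsum : (∫ s in a..b, fp s) + (∫ s in a..b, fm s) = ∫ s in a..b, |w s| := by
    rw [← intervalIntegral.integral_add (hfpc.intervalIntegrable _ _)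
      (hfmc.intervalIntegrable _ _)]
    apply intervalIntegral.integral_congr
    intro s _
    show fp s + fm s = |w s|
    rw [hfpval, hfmval]
    rcases le_total (w s) 0 with h | h
    · rw [max_eq_right h, max_eq_left (by linarith), abs_of_nonpos h]; ring
    · rw [max_eq_left h, max_eq_right (by linarith), abs_of_nonneg h]; ring
  have hVle : (∫ s in a..b, |w s|) ≤ (b - a) * M := by
    have h1 : ∀ s ∈ Icc a b, |w s| ≤ M := fun s _ => by rw [hwval, hM]; exact hd s
    calc (∫ s in a..b, |w s|) ≤ ∫ _ in a..b, M :=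
          intervalIntegral.integral_mono_on hab'.le
            (hwc.abs.intervalIntegrable _ _) intervalIntegrable_const h1
      _ = (b - a) * M := by rw [intervalIntegral.integral_const, smul_eq_mul]
  have final : N (fun t => (∫ s in a..t, fp s) + (-1 : ℝ) * (∫ s in a..t, fm s))
      ≤ ((∫ s in a..b, fp s) + (∫ s in a..b, fm s)) * N Sfun := by
    calc N (fun t => (∫ s in a..t, fp s) + (-1 : ℝ) * (∫ s in a..t, fm s))
        ≤ N (fun t => ∫ s in a..t, fp s) + N (fun t => (-1 : ℝ) * (∫ s in a..t, fm s)) := step1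
      _ = N (fun t => ∫ s in a..t, fp s) + N (fun t => ∫ s in a..t, fm s) := by rw [step2]
      _ ≤ (∫ s in a..b, fp s) * N Sfun + (∫ s in a..b, fm s) * N Sfun := add_le_add b1 b2
      _ = ((∫ s in a..b, fp s) + (∫ s in a..b, fm s)) * N Sfun := by ring
  rcases eq_or_lt_of_le hNS with h0 | h0
  · rw [← h0, mul_zero] at final
    linarith
  · have hb0 : b - a ≠ 0 := by intro hh; linarith [hab']
    have hN0 : N Sfun ≠ 0 := ne_of_gt h0
    calc N (fun t => (∫ s in a..t, fp s) + (-1 : ℝ) * (∫ s in a..t, fm s))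
        ≤ ((∫ s in a..b, fp s) + (∫ s in a..b, fm s)) * N Sfun := final
      _ = (∫ s in a..b, |w s|) * N Sfun := by rw [hVsum]
      _ ≤ ((b - a) * M) * N Sfun := mul_le_mul_of_nonneg_right hVle hNS
      _ = ε := by rw [hM]; field_simp
end
end
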